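/- arXiv:2411.07812 — 3 statements merged into one kernel-verified Lean document; each statement's English description precedes it below -/
import Mathlib

section
/- Let G be a finite simple connected non-bipartite graph on d vertices with n edges. Then the Krull dimension of the binomial edge ring R(G) is at most min{n, 2d−3}. -/
open MvPolynomial

set_option synthInstance.maxHeartbeats 1000000
set_option maxHeartbeats 1000000

open MvPolynomial Submodule Set

namespace BER

set_option linter.unusedSectionVars false
variable {k P : Type*} [Field k] [CommRing P] [IsDomain P] [Algebra k P]
variable {ι : Type*} [Fintype ι]

/-- Span of monomials in `g` of total degree at most `E`. -/
noncomputable def V (g : ι → P) (E : ℕ) : Submodule k P :=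
  Submodule.span k ((fun β : ι → ℕ => ∏ i, g i ^ β i) '' {β | ∑ i, β i ≤ E})

lemma one_mem_V (g : ι → P) (E : ℕ) : (1 : P) ∈ V (k := k) g E := by
  apply subset_span
  exact ⟨fun _ => 0, by simp, by simp⟩

lemma V_mono (g : ι → P) {E F : ℕ} (h : E ≤ F) : V (k := k) g E ≤ V g F :=
  span_mono (image_mono fun β hβ => le_trans hβ h)

lemma mul_mem_V (g : ι → P) {E F : ℕ} {y z : P} (hy : y ∈ V (k := k) g E)
    (hz : z ∈ V (k := k) g F) : y * z ∈ V (k := k) g (E + F) := by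
  have h : V (k := k) g E * V g F ≤ V g (E + F) := by
    rw [V, V, Submodule.span_mul_span]
    apply span_mono
    rintro _ ⟨_, ⟨β, hβ, rfl⟩, _, ⟨γ, hγ, rfl⟩, rfl⟩
    refine ⟨fun i => β i + γ i, ?_, ?_⟩
    · simp only [mem_setOf_eq] at hβ hγ ⊢
      rw [Finset.sum_add_distrib]
      omega
    · simp [pow_add, Finset.prod_mul_distrib]
  exact h (Submodule.mul_mem_mul hy hz)

lemma pow_mem_V (g : ι → P) {E : ℕ} {y : P} (hy : y ∈ V (k := k) g E) (a : ℕ) :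
    y ^ a ∈ V (k := k) g (a * E) := by
  induction a with
  | zero => simpa using one_mem_V g 0
  | succ a ih =>
    rw [pow_succ, Nat.succ_mul]
    exact mul_mem_V g ih hy

lemma prod_mem_V (g : ι → P) {J : Type*} (s : Finset J) (f : J → P) (E : J → ℕ)
    (h : ∀ j ∈ s, f j ∈ V (k := k) g (E j)) :
    (∏ j ∈ s, f j) ∈ V (k := k) g (∑ j ∈ s, E j) := by
  classical
  induction s using Finset.induction with
  | empty => simpa using one_mem_V g 0
  | insert _ _ hj ih =>
    rw [Finset.prod_insert hj, Finset.sum_insert hj]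
    exact mul_mem_V g (h _ (Finset.mem_insert_self _ _))
      (ih fun j hjs => h j (Finset.mem_insert_of_mem hjs))

lemma exists_mem_V (g : ι → P) {b : P} (hb : b ∈ Algebra.adjoin k (Set.range g)) :
    ∃ E, b ∈ V (k := k) g E := by
  classical
  induction hb using Algebra.adjoin_induction with
  | mem x hx =>
    obtain ⟨i, rfl⟩ := hx
    refine ⟨1, subset_span ⟨fun j => if j = i then 1 else 0, by simp, by simp⟩⟩
  | algebraMap r =>
    refine ⟨0, ?_⟩
    rw [Algebra.algebraMap_eq_smul_one]
    exact smul_mem _ _ (one_mem_V g 0)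
  | add x y hx hy ihx ihy =>
    obtain ⟨E1, h1⟩ := ihx; obtain ⟨E2, h2⟩ := ihy
    exact ⟨E1 + E2, add_mem (V_mono g (Nat.le_add_right _ _) h1)
      (V_mono g (Nat.le_add_left _ _) h2)⟩
  | mul x y hx hy ihx ihy =>
    obtain ⟨E1, h1⟩ := ihx; obtain ⟨E2, h2⟩ := ihy
    exact ⟨E1 + E2, mul_mem_V g h1 h2⟩

/-- Core counting lemma: a family of `N + 1` elements of a domain, each of which is a
fraction of elements of the subalgebra generated by at most `N` elements, cannot be
algebraically independent over `k`. -/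
lemma core (g : ι → P) (N : ℕ) (hNι : Fintype.card ι ≤ N) (x p q : Fin (N + 1) → P)
    (hp : ∀ j, p j ∈ Algebra.adjoin k (Set.range g))
    (hq : ∀ j, q j ∈ Algebra.adjoin k (Set.range g))
    (hq0 : ∀ j, q j ≠ 0) (hxq : ∀ j, x j * q j = p j) :
    ¬ AlgebraicIndependent k x := by
  classical
  intro h
  choose Ep hEp using fun j => exists_mem_V (k := k) g (hp j)
  choose Eq' hEq using fun j => exists_mem_V (k := k) g (hq j)
  set E0 := ∑ j, (Ep j + Eq' j) with hE0
  have hpE : ∀ j, p j ∈ V (k := k) g E0 := fun j => by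
    refine V_mono g ?_ (hEp j)
    calc Ep j ≤ Ep j + Eq' j := Nat.le_add_right _ _
    _ ≤ E0 := Finset.single_le_sum (f := fun j => Ep j + Eq' j)
        (fun _ _ => Nat.zero_le _) (Finset.mem_univ j)
  have hqE : ∀ j, q j ∈ V (k := k) g E0 := fun j => by
    refine V_mono g ?_ (hEq j)
    calc Eq' j ≤ Ep j + Eq' j := Nat.le_add_left _ _
    _ ≤ E0 := Finset.single_le_sum (f := fun j => Ep j + Eq' j)
        (fun _ _ => Nat.zero_le _) (Finset.mem_univ j)
  set Q : P := ∏ j, q j with hQ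
  have hQ0 : Q ≠ 0 := Finset.prod_ne_zero_iff.2 fun j _ => hq0 j
  set c := (N + 1) * E0 + 1 with hc
  have hyc : ∀ j, x j * Q ∈ V (k := k) g c := by
    intro j
    have hxQ : x j * Q = p j * ∏ i ∈ Finset.univ.erase j, q i := by
      rw [hQ, ← Finset.prod_erase_mul Finset.univ q (Finset.mem_univ j), ← hxq j]
      ring
    rw [hxQ]
    have h2 : (∏ i ∈ Finset.univ.erase j, q i) ∈
        V (k := k) g (∑ i ∈ Finset.univ.erase j, E0) :=
      prod_mem_V g _ _ _ fun i _ => hqE i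
    have h3 := mul_mem_V g (hpE j) h2
    refine V_mono g ?_ h3
    rw [Finset.sum_const, Finset.card_erase_of_mem (Finset.mem_univ j)]
    simp only [Finset.card_univ, Fintype.card_fin, smul_eq_mul, Nat.add_sub_cancel]
    calc E0 + N * E0 = (N + 1) * E0 := by ring
    _ ≤ c := by rw [hc]; exact Nat.le_succ _
  have hQc : Q ∈ V (k := k) g c := by
    have h1 := prod_mem_V (k := k) g Finset.univ q (fun _ => E0) (fun i _ => hqE i)
    refine V_mono g ?_ h1
    rw [Finset.sum_const]
    simp only [Finset.card_univ, Fintype.card_fin, smul_eq_mul]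
    rw [hc]; exact Nat.le_succ _
  set S := (c + 1) * (N + 1) with hS
  set D := S ^ N with hD
  set T := (N + 1) * D with hT
  -- the family of monomials in x, multiplied by Q ^ T
  set F : (Fin (N + 1) → Fin (D + 1)) → P :=
    fun α => (∏ j, x j ^ (α j : ℕ)) * Q ^ T with hF
  -- linear independence of F
  have hmon : LinearIndependent k
      (fun β : (Fin (N + 1) →₀ ℕ) => (MvPolynomial.aeval x) (monomial β (1 : k))) := by
    have hb := ((MvPolynomial.basisMonomials (Fin (N + 1)) k).linearIndependent).map'
      (MvPolynomial.aeval x).toLinearMap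
      (LinearMap.ker_eq_bot.2 (algebraicIndependent_iff_injective_aeval.1 h))
    have he : (⇑(MvPolynomial.aeval x).toLinearMap ∘
        ⇑(MvPolynomial.basisMonomials (Fin (N + 1)) k)) =
        fun β => (MvPolynomial.aeval x) (monomial β (1 : k)) := by
      funext β
      simp [MvPolynomial.coe_basisMonomials]
    rwa [he] at hb
  set emb : (Fin (N + 1) → Fin (D + 1)) → (Fin (N + 1) →₀ ℕ) :=
    fun α => Finsupp.equivFunOnFinite.symm (fun j => (α j : ℕ)) with hemb
  have hembinj : Function.Injective emb := by
    intro a b hab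
    have h1 := Finsupp.equivFunOnFinite.symm.injective hab
    funext j
    exact Fin.val_injective (congrFun h1 j)
  have haem : ∀ α, (MvPolynomial.aeval x) (monomial (emb α) (1 : k)) =
      ∏ j, x j ^ (α j : ℕ) := by
    intro α
    rw [MvPolynomial.aeval_monomial, map_one, one_mul]
    rw [Finsupp.prod_fintype _ _ (fun i => pow_zero _)]
    rfl
  have hFli : LinearIndependent k F := by
    have h1 : LinearIndependent k
        (fun α : (Fin (N + 1) → Fin (D + 1)) => ∏ j, x j ^ (α j : ℕ)) := by
      have h2 := hmon.comp emb hembinj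
      have he : ((fun β : (Fin (N + 1) →₀ ℕ) => (MvPolynomial.aeval x) (monomial β (1 : k)))
          ∘ emb) = fun α : (Fin (N + 1) → Fin (D + 1)) => ∏ j, x j ^ (α j : ℕ) := by
        funext α
        exact haem α
      rwa [he] at h2
    have h2 := h1.map' (LinearMap.mulRight k (Q ^ T))
      (LinearMap.ker_eq_bot.2 (mul_left_injective₀ (pow_ne_zero T hQ0)))
    have he : (⇑(LinearMap.mulRight k (Q ^ T)) ∘
        fun α : (Fin (N + 1) → Fin (D + 1)) => ∏ j, x j ^ (α j : ℕ)) = F := by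
      funext α
      simp [hF]
    rwa [he] at h2
  -- each F α lies in V g (c * T)
  have hFmem : ∀ α, F α ∈ V (k := k) g (c * T) := by
    intro α
    have hsum : (∑ j, (α j : ℕ)) ≤ T := by
      calc (∑ j, (α j : ℕ)) ≤ ∑ _j : Fin (N + 1), D :=
        Finset.sum_le_sum fun j _ => Nat.lt_succ_iff.1 (α j).isLt
      _ = (N + 1) * D := by rw [Finset.sum_const]; simp [Finset.card_univ]
    have hFeq : F α = (∏ j, (x j * Q) ^ (α j : ℕ)) * Q ^ (T - ∑ j, (α j : ℕ)) := by
      rw [hF]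
      simp only [mul_pow, Finset.prod_mul_distrib, Finset.prod_pow_eq_pow_sum]
      rw [mul_assoc, ← pow_add, Nat.add_sub_cancel' hsum]
    rw [hFeq]
    have h1 : (∏ j, (x j * Q) ^ (α j : ℕ)) ∈ V (k := k) g (∑ j, (α j : ℕ) * c) :=
      prod_mem_V g _ _ _ fun j _ => pow_mem_V g (hyc j) _
    have h2 : Q ^ (T - ∑ j, (α j : ℕ)) ∈ V (k := k) g ((T - ∑ j, (α j : ℕ)) * c) :=
      pow_mem_V g hQc _
    have h3 := mul_mem_V g h1 h2
    refine V_mono g ?_ h3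
    rw [← Finset.sum_mul, ← Nat.add_mul, Nat.add_sub_cancel' hsum, Nat.mul_comm]
  -- the spanning set
  set w : Set P := Set.range (fun β : ι → Fin (c * T + 1) => ∏ i, g i ^ (β i : ℕ)) with hw
  have hVw : V (k := k) g (c * T) ≤ Submodule.span k w := by
    rw [V]
    apply span_le.2
    rintro _ ⟨β, hβ, rfl⟩
    apply Submodule.subset_span
    simp only [mem_setOf_eq] at hβ
    refine ⟨fun i => ⟨β i, ?_⟩, rfl⟩
    have h1 : β i ≤ ∑ i', β i' :=
      Finset.single_le_sum (fun _ _ => Nat.zero_le _) (Finset.mem_univ i)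
    omega
  have hcard := linearIndependent_le_span_aux' F hFli w
    (fun y hy => by
      obtain ⟨α, rfl⟩ := hy
      exact hVw (hFmem α))
  rw [Fintype.card_fun, Fintype.card_fin, Fintype.card_fin] at hcard
  have hwcard : Fintype.card w ≤ (c * T + 1) ^ N := by
    calc Fintype.card w ≤ Fintype.card (ι → Fin (c * T + 1)) := Fintype.card_range_le _
    _ = (c * T + 1) ^ Fintype.card ι := by rw [Fintype.card_fun, Fintype.card_fin]
    _ ≤ (c * T + 1) ^ N := Nat.pow_le_pow_right (Nat.succ_le_succ (Nat.zero_le _)) hNι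
  -- arithmetic contradiction
  have h2 : c * T + 1 ≤ S * (D + 1) := by
    rw [hT, hS]
    nlinarith [Nat.zero_le c, Nat.zero_le N, Nat.zero_le D]
  have h3 : (c * T + 1) ^ N ≤ S ^ N * (D + 1) ^ N := by
    rw [← Nat.mul_pow]
    exact Nat.pow_le_pow_left h2 N
  have h4 : (D + 1) ^ (N + 1) ≤ D * (D + 1) ^ N := by
    calc (D + 1) ^ (N + 1) ≤ (c * T + 1) ^ N := hcard.trans hwcard
    _ ≤ S ^ N * (D + 1) ^ N := h3
    _ = D * (D + 1) ^ N := by rw [hD]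
  have h5 : (D + 1) ^ (N + 1) = (D + 1) * (D + 1) ^ N := by ring
  have h6 : (0:ℕ) < (D + 1) ^ N := Nat.pow_pos (Nat.succ_pos D)
  nlinarith


section Chain

variable {k D : Type*} [Field k] [CommRing D] [Algebra k D]

lemma step {p q : Ideal D} [p.IsPrime] [q.IsPrime] (hpq : p < q) {s : ℕ} {y : Fin s → D}
    (hy : AlgebraicIndependent k (Ideal.Quotient.mk q ∘ y)) :
    ∃ z : Fin (s + 1) → D, AlgebraicIndependent k (Ideal.Quotient.mk p ∘ z) := by
  classical
  obtain ⟨a, haq, hap⟩ := SetLike.exists_of_lt hpq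
  let φ : (D ⧸ p) →ₐ[k] D ⧸ q := Ideal.Quotient.liftₐ p (Ideal.Quotient.mkₐ k q)
    (fun b hb => by
      simpa using Ideal.Quotient.eq_zero_iff_mem.2 (le_of_lt hpq hb))
  have hφmk : ∀ b : D, φ (Ideal.Quotient.mk p b) = Ideal.Quotient.mk q b := by
    intro b
    simp [φ, Ideal.Quotient.liftₐ_apply, Ideal.Quotient.lift_mk]
    rfl
  have hyp : AlgebraicIndependent k (Ideal.Quotient.mk p ∘ y) := by
    apply AlgebraicIndependent.of_comp φ
    have he : (⇑φ ∘ (⇑(Ideal.Quotient.mk p) ∘ y)) = Ideal.Quotient.mk q ∘ y := by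
      funext i; exact hφmk (y i)
    rwa [he]
  have habar : (Ideal.Quotient.mk p a) ≠ 0 :=
    fun h0 => hap (Ideal.Quotient.eq_zero_iff_mem.1 h0)
  set R₀ := Algebra.adjoin k (Set.range (⇑(Ideal.Quotient.mk p) ∘ y)) with hR₀
  have key : ∀ n (F : Polynomial R₀), F.natDegree ≤ n → F ≠ 0 →
      Polynomial.aeval (Ideal.Quotient.mk p a) F = 0 → False := by
    intro n
    induction n with
    | zero =>
      intro F hdeg hF0 hev
      have hFC : F = Polynomial.C (F.coeff 0) :=
        Polynomial.eq_C_of_natDegree_le_zero hdeg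
      rw [hFC, Polynomial.aeval_C] at hev
      have : F.coeff 0 = 0 := by
        have hinj : Function.Injective (algebraMap R₀ (D ⧸ p)) :=
          Subtype.val_injective
        simpa using hinj (by simpa using hev)
      exact hF0 (by rw [hFC, this, map_zero])
    | succ n ih =>
      intro F hdeg hF0 hev
      by_cases hc : F.coeff 0 = 0
      · have hXdvd : F = Polynomial.X * F.divX := by
          conv_lhs => rw [← Polynomial.X_mul_divX_add F]
          rw [hc, map_zero, add_zero]
        have hdiv0 : F.divX ≠ 0 := fun h => hF0 (by rw [hXdvd, h, mul_zero])
        have hev2 : Polynomial.aeval (Ideal.Quotient.mk p a) F.divX = 0 := by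
          have h1 := hev
          rw [hXdvd, map_mul, Polynomial.aeval_X] at h1
          exact (mul_eq_zero.1 h1).resolve_left habar
        refine ih F.divX ?_ hdiv0 hev2
        have := Polynomial.natDegree_divX_eq_natDegree_tsub_one (p := F)
        omega
      · have hid : (Ideal.Quotient.mk p a) * Polynomial.aeval (Ideal.Quotient.mk p a) F.divX
            + algebraMap R₀ (D ⧸ p) (F.coeff 0) = 0 := by
          have h1 : Polynomial.aeval (Ideal.Quotient.mk p a)
              (Polynomial.X * F.divX + Polynomial.C (F.coeff 0)) = 0 := by
            rw [Polynomial.X_mul_divX_add]; exact hev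
          simp only [map_add, map_mul, Polynomial.aeval_X, Polynomial.aeval_C] at h1
          exact h1
        have hφ0 : φ (algebraMap R₀ (D ⧸ p) (F.coeff 0)) = 0 := by
          have h1 := congrArg φ hid
          rw [map_add, map_mul, map_zero] at h1
          have hφa : φ (Ideal.Quotient.mk p a) = 0 := by
            rw [hφmk]; exact Ideal.Quotient.eq_zero_iff_mem.2 haq
          rw [hφa, zero_mul, zero_add] at h1
          exact h1
        have hc0mem : ((F.coeff 0 : R₀) : D ⧸ p) ∈
            Algebra.adjoin k (Set.range (⇑(Ideal.Quotient.mk p) ∘ y)) := (F.coeff 0).2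
        rw [Algebra.adjoin_range_eq_range_aeval] at hc0mem
        obtain ⟨Pc, hPc⟩ := hc0mem
        have hcast : algebraMap R₀ (D ⧸ p) (F.coeff 0) = ((F.coeff 0 : R₀) : D ⧸ p) := rfl
        have hq0 : MvPolynomial.aeval (⇑(Ideal.Quotient.mk q) ∘ y) Pc = 0 := by
          have h2 : φ (MvPolynomial.aeval (⇑(Ideal.Quotient.mk p) ∘ y) Pc) =
              MvPolynomial.aeval (fun i => φ ((⇑(Ideal.Quotient.mk p) ∘ y) i)) Pc :=
            MvPolynomial.comp_aeval_apply (f := ⇑(Ideal.Quotient.mk p) ∘ y) φ Pc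
          have he : (fun i => φ ((⇑(Ideal.Quotient.mk p) ∘ y) i)) =
              ⇑(Ideal.Quotient.mk q) ∘ y := by
            funext i; exact hφmk (y i)
          rw [he] at h2
          have hPc' : (MvPolynomial.aeval (⇑(Ideal.Quotient.mk p) ∘ y)) Pc =
              ((F.coeff 0 : R₀) : D ⧸ p) := hPc
          rw [← h2, hPc', ← hcast, hφ0]
        have hPc0 : Pc = 0 := hy.eq_zero_of_aeval_eq_zero Pc hq0
        have : ((F.coeff 0 : R₀) : D ⧸ p) = 0 := by
          have hPc' : (MvPolynomial.aeval (⇑(Ideal.Quotient.mk p) ∘ y)) Pc =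
              ((F.coeff 0 : R₀) : D ⧸ p) := hPc
          rw [← hPc', hPc0, map_zero]
        exact hc (Subtype.val_injective (by simpa using this))
  have htr : Transcendental R₀ (Ideal.Quotient.mk p a) := by
    intro halg
    obtain ⟨F, hF0, hFa⟩ := halg
    exact key F.natDegree F le_rfl hF0 hFa
  have hopt := (hyp.option_iff_transcendental (Ideal.Quotient.mk p a)).2 htr
  refine ⟨Fin.cons a y, ?_⟩
  have hcomp := hopt.comp (finSuccEquiv s) (Equiv.injective _)
  have he : ((fun o : Option (Fin s) => o.elim (Ideal.Quotient.mk p a)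
      (⇑(Ideal.Quotient.mk p) ∘ y)) ∘ (finSuccEquiv s)) =
      ⇑(Ideal.Quotient.mk p) ∘ Fin.cons a y := by
    funext i
    cases i using Fin.cases with
    | zero => simp
    | succ i => simp
  rwa [he] at hcomp

lemma chain {l : ℕ} (f : Fin (l + 1) → PrimeSpectrum D) (hf : StrictMono f) :
    ∃ z : Fin l → D, AlgebraicIndependent k (Ideal.Quotient.mk (f 0).asIdeal ∘ z) := by
  induction l with
  | zero =>
    refine ⟨Fin.elim0, ?_⟩
    haveI : Nontrivial (D ⧸ (f 0).asIdeal) :=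
      Ideal.Quotient.nontrivial_iff.mpr (f 0).isPrime.ne_top
    exact algebraicIndependent_empty_type
  | succ l ih =>
    obtain ⟨z, hz⟩ := ih (f ∘ Fin.succ) (hf.comp Fin.strictMono_succ)
    have hlt : (f 0).asIdeal < (f 1).asIdeal :=
      (PrimeSpectrum.asIdeal_lt_asIdeal _ _).2 (hf (by
        exact Fin.lt_def.2 (by norm_num)))
    have hz1 : AlgebraicIndependent k (Ideal.Quotient.mk (f 1).asIdeal ∘ z) := by
      have : (f ∘ Fin.succ) 0 = f 1 := by
        simp [Function.comp]
      rwa [this] at hz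
    obtain ⟨z', hz'⟩ := step (k := k) hlt hz1
    exact ⟨z', hz'⟩

end Chain

section DimLe

variable {k P : Type*} [Field k] [CommRing P] [IsDomain P] [Algebra k P]

lemma dim_le (A : Subalgebra k P) {ι : Type*} [Fintype ι] (g : ι → P) (w : P) (hw : w ≠ 0)
    (hwB : w ∈ Algebra.adjoin k (Set.range g))
    (hA : ∀ a : A, ∃ s : ℕ, (a : P) * w ^ s ∈ Algebra.adjoin k (Set.range g)) :
    ringKrullDim A ≤ (Fintype.card ι : WithBot ℕ∞) := by
  rw [ringKrullDim, Order.krullDim]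
  apply iSup_le
  intro pch
  have hlen : pch.length ≤ Fintype.card ι := by
    by_contra hlen
    push_neg at hlen
    obtain ⟨z, hz⟩ := chain (k := k) pch.toFun pch.strictMono
    have hzA : AlgebraicIndependent k z :=
      AlgebraicIndependent.of_comp (Ideal.Quotient.mkₐ k (pch.toFun 0).asIdeal) hz
    have hzP : AlgebraicIndependent k (fun i => (z i : P)) :=
      hzA.map' (f := A.val) Subtype.val_injective
    set x : Fin (Fintype.card ι + 1) → P := fun j => (z (Fin.castLE hlen j) : P) with hx
    have hxi : AlgebraicIndependent k x :=
      hzP.comp (Fin.castLE hlen) (Fin.castLE_injective _)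
    choose sv hsv using fun j => hA (z (Fin.castLE hlen j))
    exact core g (Fintype.card ι) le_rfl x (fun j => x j * w ^ sv j) (fun j => w ^ sv j)
      (fun j => hsv j) (fun j => pow_mem hwB _) (fun j => pow_ne_zero _ hw)
      (fun j => rfl) hxi
  exact_mod_cast Nat.cast_le.2 hlen

end DimLe

end BER

/-- The binomial edge ring `R(G)` of a finite simple graph `G` on vertex set `{1,…,d}`:
the `k`-subalgebra of `k[x_1,…,x_d,y_1,…,y_d]` generated by the binomials
`f_{ij} = x_i y_j − x_j y_i` for all edges `{i,j}` of `G`.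
(Variable `Sum.inl i` is `x_i` and `Sum.inr i` is `y_i`.) -/
noncomputable def binomialEdgeRing (k : Type*) [Field k] {d : ℕ} (G : SimpleGraph (Fin d)) :
    Subalgebra k (MvPolynomial (Fin d ⊕ Fin d) k) :=
  Algebra.adjoin k
    {p | ∃ i j : Fin d, G.Adj i j ∧
      p = X (Sum.inl i) * X (Sum.inr j) - X (Sum.inl j) * X (Sum.inr i)}

/-- **Proposition 4.1 (ii).** If `G` is a finite simple connected non-bipartite graph on `d`
vertices with `n` edges, then the Krull dimension of `R(G)` is at most `min{n, 2d−3}`. -/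
theorem krullDim_binomialEdgeRing_le_of_not_bipartite (k : Type*) [Field k]
    (d : ℕ) (G : SimpleGraph (Fin d)) [Fintype G.edgeSet]
    (hconn : G.Connected) (hnbip : ¬ G.Colorable 2) (n : ℕ) (hn : n = G.edgeFinset.card) :
    ringKrullDim (binomialEdgeRing k G) ≤ ((min n (2 * d - 3) : ℕ) : WithBot ℕ∞) := by
  classical
  subst hn
  set P := MvPolynomial (Fin d ⊕ Fin d) k with hP
  set f : Fin d → Fin d → P :=
    fun i j => X (Sum.inl i) * X (Sum.inr j) - X (Sum.inl j) * X (Sum.inr i) with hf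
  set S : Set P := {p | ∃ i j : Fin d, G.Adj i j ∧ p = f i j} with hS
  have hAdef : binomialEdgeRing k G = Algebra.adjoin k S := rfl
  -- d ≥ 3
  have hd : 3 ≤ d := by
    by_contra hd
    push_neg at hd
    have h1 : G.Colorable (Fintype.card (Fin d)) := G.colorable_of_fintype
    rw [Fintype.card_fin] at h1
    exact hnbip (h1.mono (by omega))
  -- Bound 1 : by the number of edges
  have bound1 : ringKrullDim (binomialEdgeRing k G) ≤ (G.edgeFinset.card : WithBot ℕ∞) := by
    set g1 : Fin G.edgeFinset.card → P :=
      fun t => let e := G.edgeFinset.equivFin.symm t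
        f (Quot.out (e : Sym2 (Fin d))).1 (Quot.out (e : Sym2 (Fin d))).2 with hg1
    have hScover : S ⊆ (Algebra.adjoin k (Set.range g1) : Subalgebra k P) := by
      rintro _ ⟨i, j, hij, rfl⟩
      have he : s(i, j) ∈ G.edgeFinset := by
        rw [SimpleGraph.mem_edgeFinset, SimpleGraph.mem_edgeSet]
        exact hij
      set t := G.edgeFinset.equivFin ⟨s(i, j), he⟩ with ht
      have hgt : g1 t = f (Quot.out (s(i, j))).1 (Quot.out (s(i, j))).2 := by
        rw [hg1]
        simp [ht]
      have hout : s((Quot.out (s(i, j))).1, (Quot.out (s(i, j))).2) = s(i, j) := by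
        have := Quot.out_eq (s(i, j))
        exact this
      rw [Sym2.eq_iff] at hout
      rcases hout with ⟨h1, h2⟩ | ⟨h1, h2⟩
      · have : f i j = g1 t := by rw [hgt, h1, h2]
        rw [this]
        exact Algebra.subset_adjoin ⟨t, rfl⟩
      · have : f i j = -g1 t := by rw [hgt, h1, h2]; ring
        rw [this]
        exact neg_mem (Algebra.subset_adjoin ⟨t, rfl⟩)
    have hAg1 : ∀ a : (binomialEdgeRing k G), (a : P) ∈ Algebra.adjoin k (Set.range g1) := by
      intro a
      have ha : (a : P) ∈ Algebra.adjoin k S := a.2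
      exact Algebra.adjoin_le hScover ha
    have := BER.dim_le (binomialEdgeRing k G) g1 (1 : P) one_ne_zero (one_mem _)
      (fun a => ⟨0, by simpa using hAg1 a⟩)
    rwa [Fintype.card_fin] at this
  -- Bound 2 : 2d - 3
  have bound2 : ringKrullDim (binomialEdgeRing k G) ≤ ((2 * d - 3 : ℕ) : WithBot ℕ∞) := by
    set v0 : Fin d := ⟨0, by omega⟩ with hv0
    set v1 : Fin d := ⟨1, by omega⟩ with hv1
    set g2 : (Fin (d - 1) ⊕ Fin (d - 2)) → P :=
      Sum.elim (fun t => f v0 ⟨t.1 + 1, by omega⟩) (fun t => f v1 ⟨t.1 + 2, by omega⟩) with hg2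
    set B2 := Algebra.adjoin k (Set.range g2) with hB2
    set w : P := f v0 v1 with hw
    have hfii : ∀ i : Fin d, f i i = 0 := fun i => by rw [hf]; ring
    have hf0 : ∀ i : Fin d, f v0 i ∈ B2 := by
      intro i
      by_cases h0 : i = v0
      · rw [h0, hfii]; exact zero_mem _
      · have hi1 : 1 ≤ i.1 := by
          rcases Nat.eq_zero_or_pos i.1 with h | h
          · exact absurd (Fin.ext h) h0
          · omega
        have hival : (⟨i.1 - 1 + 1, by omega⟩ : Fin d) = i := Fin.ext (by simp; omega)
        have : f v0 i = g2 (Sum.inl ⟨i.1 - 1, by omega⟩) := by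
          rw [hg2]
          simp only [Sum.elim_inl]
          rw [hival]
        rw [this]
        exact Algebra.subset_adjoin ⟨_, rfl⟩
    have hwB : w ∈ B2 := by
      have : w = g2 (Sum.inl ⟨0, by omega⟩) := rfl
      rw [this]
      exact Algebra.subset_adjoin ⟨_, rfl⟩
    have hf1 : ∀ i : Fin d, f v1 i ∈ B2 := by
      intro i
      by_cases h1 : i = v1
      · rw [h1, hfii]; exact zero_mem _
      by_cases h0 : i = v0
      · have : f v1 i = -w := by rw [h0, hw, hf]; ring
        rw [this]
        exact neg_mem hwB
      · have hi2 : 2 ≤ i.1 := by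
          have hne0 : i.1 ≠ 0 := fun h => h0 (Fin.ext h)
          have hne1 : i.1 ≠ 1 := fun h => h1 (Fin.ext h)
          omega
        have hival : (⟨i.1 - 2 + 2, by omega⟩ : Fin d) = i := Fin.ext (by simp; omega)
        have : f v1 i = g2 (Sum.inr ⟨i.1 - 2, by omega⟩) := by
          rw [hg2]
          simp only [Sum.elim_inr]
          rw [hival]
        rw [this]
        exact Algebra.subset_adjoin ⟨_, rfl⟩
    have hw0 : w ≠ 0 := by
      intro h0
      set u : (Fin d ⊕ Fin d) → k :=
        fun z => if z = Sum.inl v0 ∨ z = Sum.inr v1 then 1 else 0 with hu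
      have h1 : MvPolynomial.eval u w = 1 := by
        rw [hw, hf]
        simp only [map_sub, map_mul, MvPolynomial.eval_X]
        have e1 : u (Sum.inl v0) = 1 := by simp [hu]
        have e2 : u (Sum.inr v1) = 1 := by simp [hu]
        have e3 : u (Sum.inl v1) = 0 := by
          simp only [hu, if_neg]
          rw [if_neg]
          rintro (h | h)
          · exact absurd (Sum.inl.inj h) (by intro hh; exact absurd (Fin.mk.inj_iff.1 hh) one_ne_zero)
          · exact Sum.inl_ne_inr h
        have e4 : u (Sum.inr v0) = 0 := by
          simp only [hu]
          rw [if_neg]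
          rintro (h | h)
          · exact Sum.inr_ne_inl h
          · exact absurd (Sum.inr.inj h) (by intro hh; exact absurd (Fin.mk.inj_iff.1 hh) zero_ne_one)
        rw [e1, e2, e3, e4]
        ring
      rw [h0, map_zero] at h1
      exact zero_ne_one h1
    have hPl : ∀ x ∈ S, x * w ∈ B2 := by
      rintro _ ⟨i, j, hij, rfl⟩
      have hplucker : f i j * w = f v0 i * f v1 j - f v0 j * f v1 i := by
        rw [hw, hf]; ring
      rw [hplucker]
      exact sub_mem (mul_mem (hf0 i) (hf1 j)) (mul_mem (hf0 j) (hf1 i))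
    have hA2' : ∀ x ∈ Algebra.adjoin k S, ∃ s : ℕ, x * w ^ s ∈ B2 := by
      intro x hx
      induction hx using Algebra.adjoin_induction with
      | mem x hx => exact ⟨1, by rw [pow_one]; exact hPl x hx⟩
      | algebraMap r => exact ⟨0, by simpa using Subalgebra.algebraMap_mem B2 r⟩
      | add x y hx hy ihx ihy =>
        obtain ⟨s1, h1⟩ := ihx
        obtain ⟨s2, h2⟩ := ihy
        refine ⟨s1 + s2, ?_⟩
        have : (x + y) * w ^ (s1 + s2) = (x * w ^ s1) * w ^ s2 + (y * w ^ s2) * w ^ s1 := by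
          ring
        rw [this]
        exact add_mem (mul_mem h1 (pow_mem hwB _)) (mul_mem h2 (pow_mem hwB _))
      | mul x y hx hy ihx ihy =>
        obtain ⟨s1, h1⟩ := ihx
        obtain ⟨s2, h2⟩ := ihy
        refine ⟨s1 + s2, ?_⟩
        have : (x * y) * w ^ (s1 + s2) = (x * w ^ s1) * (y * w ^ s2) := by ring
        rw [this]
        exact mul_mem h1 h2
    have hA2 : ∀ a : (binomialEdgeRing k G), ∃ s : ℕ, (a : P) * w ^ s ∈ B2 := fun a =>
      hA2' a a.2
    have hdim := BER.dim_le (binomialEdgeRing k G) g2 w hw0 hwB hA2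
    have hcard : Fintype.card (Fin (d - 1) ⊕ Fin (d - 2)) = 2 * d - 3 := by
      rw [Fintype.card_sum, Fintype.card_fin, Fintype.card_fin]
      omega
    rwa [hcard] at hdim
  rcases le_total G.edgeFinset.card (2 * d - 3) with h | h
  · rw [min_eq_left h]; exact bound1
  · rw [min_eq_right h]; exact bound2
end

section
/- Let G be a unicyclic graph on d vertices, i.e., a finite simple connected graph containing exactly one cycle (equivalently, a connected graph with exactly d edges). Then the binomial edge ring R(G) is isomorphic as a k-algebra to a polynomial ring over k in d variables. -/
open MvPolynomial

namespace BER

variable {k : Type*} [Field k] {d : ℕ}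

/-- The exponent vector of the monomial `x_a y_b`. -/
noncomputable def uu (a b : Fin d) : (Fin d ⊕ Fin d) →₀ ℕ :=
  Finsupp.single (Sum.inl a) 1 + Finsupp.single (Sum.inr b) 1

/-- The weight of an exponent vector, given vertex weights `t` on the `x` variables. -/
def Wt (t : Fin d → ℕ) (m : (Fin d ⊕ Fin d) →₀ ℕ) : ℕ :=
  ∑ i : Fin d, m (Sum.inl i) * t i

lemma Wt_add (t : Fin d → ℕ) (m n : (Fin d ⊕ Fin d) →₀ ℕ) :
    Wt t (m + n) = Wt t m + Wt t n := by
  simp [Wt, add_mul, Finset.sum_add_distrib]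

lemma uu_apply_inl (a b v : Fin d) :
    uu a b (Sum.inl v) = if a = v then 1 else 0 := by
  simp [uu, Finsupp.single_apply]

lemma uu_apply_inr (a b v : Fin d) :
    uu a b (Sum.inr v) = if b = v then 1 else 0 := by
  simp [uu, Finsupp.single_apply]

lemma Wt_uu (t : Fin d → ℕ) (a b : Fin d) : Wt t (uu a b) = t a := by
  simp [Wt, uu_apply_inl, ite_mul]


lemma Wt_sum {ι : Type*} (t : Fin d → ℕ) (S : Finset ι) (f : ι → ((Fin d ⊕ Fin d) →₀ ℕ)) :
    Wt t (∑ i ∈ S, f i) = ∑ i ∈ S, Wt t (f i) := by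
  unfold Wt
  simp only [Finsupp.finset_sum_apply, Finset.sum_mul]
  rw [Finset.sum_comm]

lemma Wt_smul (t : Fin d → ℕ) (n : ℕ) (m : (Fin d ⊕ Fin d) →₀ ℕ) :
    Wt t (n • m) = n * Wt t m := by
  unfold Wt
  simp only [Finsupp.smul_apply, smul_eq_mul, mul_assoc]
  rw [Finset.mul_sum]

/-- Our chosen generators. -/
noncomputable def FF (k : Type*) [Field k] {d : ℕ} (A B : Fin d → Fin d) (s : Fin d) :
    MvPolynomial (Fin d ⊕ Fin d) k :=
  X (Sum.inl (A s)) * X (Sum.inr (B s)) - X (Sum.inl (B s)) * X (Sum.inr (A s))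

lemma FF_eq (A B : Fin d → Fin d) (s : Fin d) :
    FF k A B s = monomial (uu (A s) (B s)) 1 - monomial (uu (B s) (A s)) 1 := by
  rw [FF, X, X, X, X, monomial_mul, monomial_mul, one_mul, uu, uu]

section Update

open Function

lemma prod_update_pow {M : Type*} [CommMonoid M] (g : Fin d → M) (p : Fin d → ℕ) (s0 : Fin d)
    (h : p s0 ≠ 0) :
    ∏ s, g s ^ p s = g s0 * ∏ s, g s ^ (Function.update p s0 (p s0 - 1)) s := by
  classical
  have h1 : ∏ s, g s ^ (Function.update p s0 (p s0 - 1)) s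
      = g s0 ^ (p s0 - 1) * ∏ s ∈ Finset.univ \ {s0}, g s ^ p s := by
    rw [show (fun s => g s ^ (Function.update p s0 (p s0 - 1)) s)
        = Function.update (fun s => g s ^ p s) s0 (g s0 ^ (p s0 - 1)) from ?_,
      Finset.prod_update_of_mem (Finset.mem_univ s0)]
    · funext s
      by_cases hs : s = s0
      · subst hs; simp
      · simp [Function.update_of_ne hs]
  have h2 : ∏ s, g s ^ p s = g s0 ^ p s0 * ∏ s ∈ Finset.univ \ {s0}, g s ^ p s :=
    Finset.prod_eq_mul_prod_sdiff_singleton_of_mem (Finset.mem_univ s0) _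
  rw [h1, h2, ← mul_assoc, ← pow_succ', Nat.sub_add_cancel (Nat.one_le_iff_ne_zero.mpr h)]

lemma sum_update_smul {M : Type*} [AddCommMonoid M] (g : Fin d → M) (p : Fin d → ℕ) (s0 : Fin d)
    (h : p s0 ≠ 0) :
    ∑ s, p s • g s = g s0 + ∑ s, (Function.update p s0 (p s0 - 1)) s • g s :=
  prod_update_pow (M := Multiplicative M) g p s0 h

end Update

lemma coeff_prod_pow (t : Fin d → ℕ) (A B : Fin d → Fin d)
    (hAB : ∀ s, t (B s) < t (A s)) :
    ∀ (n : ℕ) (p : Fin d → ℕ), (∑ s, p s) = n → ∀ (m : (Fin d ⊕ Fin d) →₀ ℕ),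
      (∑ s, p s • t (A s)) ≤ Wt t m →
      coeff m (∏ s, (FF k A B s) ^ p s)
        = if m = ∑ s, p s • uu (A s) (B s) then 1 else 0 := by
  classical
  intro n
  induction n with
  | zero =>
    intro p hp m _
    have hp0 : ∀ s, p s = 0 := by
      intro s
      exact Finset.sum_eq_zero_iff.mp hp s (Finset.mem_univ s)
    simp only [hp0, pow_zero, Finset.prod_const_one, zero_smul, Finset.sum_const_zero]
    rw [MvPolynomial.coeff_one]
    by_cases h : m = 0 <;> simp [h, eq_comm]
  | succ n ih =>
    intro p hp m hm
    -- find s0 with p s0 ≠ 0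
    have hex : ∃ s0, p s0 ≠ 0 := by
      by_contra hc
      push_neg at hc
      simp [hc] at hp
    obtain ⟨s0, hs0⟩ := hex
    set p' : Fin d → ℕ := Function.update p s0 (p s0 - 1) with hp'
    have hsum' : (∑ s, p' s) = n := by
      have h := sum_update_smul (fun _ => (1 : ℕ)) p s0 hs0
      simp only [smul_eq_mul, mul_one, ← hp'] at h
      omega
    have hT : (∑ s, p s • t (A s)) = t (A s0) + ∑ s, p' s • t (A s) :=
      sum_update_smul (fun s => t (A s)) p s0 hs0
    have hM : (∑ s, p s • uu (A s) (B s)) = uu (A s0) (B s0) + ∑ s, p' s • uu (A s) (B s) :=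
      sum_update_smul (fun s => uu (A s) (B s)) p s0 hs0
    have hprod : (∏ s, (FF k A B s) ^ p s) = FF k A B s0 * ∏ s, (FF k A B s) ^ p' s :=
      prod_update_pow (fun s => FF k A B s) p s0 hs0
    set Q : MvPolynomial (Fin d ⊕ Fin d) k := ∏ s, (FF k A B s) ^ p' s with hQ
    set M' : (Fin d ⊕ Fin d) →₀ ℕ := ∑ s, p' s • uu (A s) (B s) with hM'
    have hWM' : Wt t M' = ∑ s, p' s • t (A s) := by
      rw [hM', Wt_sum]
      simp [Wt_smul, Wt_uu, smul_eq_mul]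
    rw [hprod, FF_eq, hM]
    have hexp : (monomial (uu (A s0) (B s0)) (1:k) - monomial (uu (B s0) (A s0)) 1) * Q
        = Q * monomial (uu (A s0) (B s0)) 1 - Q * monomial (uu (B s0) (A s0)) 1 := by ring
    rw [hexp, MvPolynomial.coeff_sub, coeff_mul_monomial', coeff_mul_monomial']
    rw [hT] at hm
    have hterm2 : (if uu (B s0) (A s0) ≤ m then coeff (m - uu (B s0) (A s0)) Q * 1 else 0) = 0 := by
      split_ifs with h2
      · have hWm2 : Wt t m = Wt t (m - uu (B s0) (A s0)) + t (B s0) := by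
          conv_lhs => rw [← tsub_add_cancel_of_le h2]
          rw [Wt_add, Wt_uu]
        have hstrict := hAB s0
        have hle : (∑ s, p' s • t (A s)) ≤ Wt t (m - uu (B s0) (A s0)) := by omega
        rw [mul_one, ih p' hsum' _ hle, if_neg ?_]
        intro hc
        rw [hc, hWM'] at hWm2
        omega
      · rfl
    rw [hterm2, sub_zero]
    by_cases h1 : uu (A s0) (B s0) ≤ m
    · have hWm : Wt t m = Wt t (m - uu (A s0) (B s0)) + t (A s0) := by
        conv_lhs => rw [← tsub_add_cancel_of_le h1]
        rw [Wt_add, Wt_uu]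
      have hle : (∑ s, p' s • t (A s)) ≤ Wt t (m - uu (A s0) (B s0)) := by omega
      rw [if_pos h1, mul_one, ih p' hsum' _ hle]
      have hiff : (m - uu (A s0) (B s0) = M') ↔ (m = uu (A s0) (B s0) + M') := by
        rw [tsub_eq_iff_eq_add_of_le h1, add_comm]
      exact if_congr hiff rfl rfl
    · have hne : m ≠ uu (A s0) (B s0) + M' := by
        intro hc
        exact h1 (by rw [hc]; exact self_le_add_right _ _)
      rw [if_neg h1, if_neg hne]

lemma algIndep (t : Fin d → ℕ) (A B : Fin d → Fin d)
    (ht : ∀ s, t (B s) < t (A s))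
    (hinj : ∀ p q : Fin d → ℕ,
      (∑ s, p s • uu (A s) (B s)) = (∑ s, q s • uu (A s) (B s)) → p = q) :
    AlgebraicIndependent k (FF k A B) := by
  classical
  rw [algebraicIndependent_iff]
  intro P hP
  by_contra hne
  have hsupp : P.support.Nonempty := MvPolynomial.support_nonempty.mpr hne
  obtain ⟨pst, hpstmem, hpstmax⟩ :=
    Finset.exists_max_image P.support (fun p => ∑ s, p s • t (A s)) hsupp
  set Mstar : (Fin d ⊕ Fin d) →₀ ℕ := ∑ s, pst s • uu (A s) (B s) with hMstar
  have hWMstar : Wt t Mstar = ∑ s, pst s • t (A s) := by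
    rw [hMstar, Wt_sum]
    simp [Wt_smul, Wt_uu]
  -- expand aeval
  have hexp : (MvPolynomial.aeval (FF k A B)) P
      = ∑ p ∈ P.support, MvPolynomial.C (MvPolynomial.coeff p P)
          * ∏ s, (FF k A B s) ^ p s := by
    rw [MvPolynomial.aeval_def, MvPolynomial.eval₂_eq]
    refine Finset.sum_congr rfl fun p _ => ?_
    rw [MvPolynomial.algebraMap_eq]
    congr 1
    refine Finset.prod_subset (Finset.subset_univ _) fun s _ hs => ?_
    rw [Finsupp.notMem_support_iff.mp hs, pow_zero]
  have hco : MvPolynomial.coeff Mstar ((MvPolynomial.aeval (FF k A B)) P)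
      = MvPolynomial.coeff pst P := by
    rw [hexp, MvPolynomial.coeff_sum]
    have hterm : ∀ p ∈ P.support,
        MvPolynomial.coeff Mstar (MvPolynomial.C (MvPolynomial.coeff p P)
          * ∏ s, (FF k A B s) ^ p s)
        = if p = pst then MvPolynomial.coeff pst P else 0 := by
      intro p hmem
      rw [MvPolynomial.coeff_C_mul]
      rw [coeff_prod_pow t A B ht _ (⇑p) rfl Mstar (by rw [hWMstar]; exact hpstmax p hmem)]
      by_cases hqe : p = pst
      · rw [if_pos hqe, hqe, if_pos rfl, mul_one]
      · rw [if_neg ?_, if_neg hqe, mul_zero]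
        intro hc
        exact hqe (DFunLike.coe_injective (hinj _ _ (by rw [← hc])))
    rw [Finset.sum_congr rfl hterm, Finset.sum_ite_eq' P.support pst
      (fun _ => MvPolynomial.coeff pst P), if_pos hpstmem]
  rw [hP, MvPolynomial.coeff_zero] at hco
  exact MvPolynomial.mem_support_iff.mp hpstmem hco.symm

lemma exists_adj_dist_lt {V : Type*} {G : SimpleGraph V} (hconn : G.Connected)
    (r v : V) (hvr : v ≠ r) : ∃ u, G.Adj u v ∧ G.dist r u < G.dist r v := by
  obtain ⟨p, hp⟩ := hconn.exists_walk_length_eq_dist r v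
  cases hq : p.reverse with
  | nil => exact absurd rfl hvr
  | cons h q' =>
    rename_i u
    have hql : q'.length + 1 = G.dist r v := by
      have := congrArg SimpleGraph.Walk.length hq
      rw [SimpleGraph.Walk.length_reverse] at this
      rw [← hp, this, SimpleGraph.Walk.length_cons]
    have hdu : G.dist r u < G.dist r v := by
      have h1 : G.dist r u ≤ q'.reverse.length := SimpleGraph.dist_le _
      rw [SimpleGraph.Walk.length_reverse] at h1
      omega
    exact ⟨u, h.symm, hdu⟩

lemma exists_order (G : SimpleGraph (Fin d)) [NeZero d] (hconn : G.Connected) :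
    ∃ σ : Equiv.Perm (Fin d), ∀ s : Fin d, s ≠ 0 →
      ∃ s' : Fin d, s' < s ∧ G.Adj (σ s') (σ s) := by
  classical
  refine ⟨Tuple.sort (fun v => G.dist 0 v), ?_⟩
  set df : Fin d → ℕ := fun v => G.dist 0 v with hdf
  set σ := Tuple.sort df with hσ
  have mono : Monotone (df ∘ σ) := Tuple.monotone_sort df
  have h0 : df (σ 0) = 0 := by
    have h1 : df (σ (σ.symm 0)) = 0 := by
      simp [df, SimpleGraph.dist_self]
    have h2 := mono (show (0 : Fin d) ≤ σ.symm 0 from Fin.zero_le _)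
    simp only [Function.comp_apply] at h2
    omega
  have hroot : σ 0 = 0 := ((hconn.dist_eq_zero_iff).mp h0).symm
  intro s hs
  have hvr : σ s ≠ 0 := by
    intro hc
    exact hs (σ.injective (by rw [hc, hroot]))
  obtain ⟨u, hadj, hdu⟩ := exists_adj_dist_lt hconn 0 (σ s) hvr
  refine ⟨σ.symm u, ?_, ?_⟩
  · by_contra hns
    push_neg at hns
    have := mono hns
    simp only [Function.comp_apply, Equiv.apply_symm_apply] at this
    simp only [df] at this
    omega
  · rw [σ.apply_symm_apply u]
    exact hadj


lemma exists_orient (G : SimpleGraph (Fin d)) [Fintype G.edgeSet]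
    (hconn : G.Connected) (hcard : G.edgeFinset.card = d) :
    ∃ (t : Fin d → ℕ) (A B : Fin d → Fin d),
      (∀ s, G.Adj (A s) (B s)) ∧ (∀ s, t (B s) < t (A s)) ∧
      (∀ i j : Fin d, G.Adj i j → ∃ s, (A s = i ∧ B s = j) ∨ (A s = j ∧ B s = i)) ∧
      (∀ p q : Fin d → ℕ,
        (∑ s, p s • uu (A s) (B s)) = (∑ s, q s • uu (A s) (B s)) → p = q) := by
  classical
  have hd : 0 < d := Fin.pos_iff_nonempty.mpr hconn.nonempty
  haveI : NeZero d := ⟨hd.ne'⟩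
  obtain ⟨σ, hσ⟩ := exists_order G hconn
  set τ : Fin d → ℕ := fun v => (σ.symm v : ℕ) with hτ
  have hτinj : Function.Injective τ := by
    intro a b hab
    exact σ.symm.injective (Fin.val_injective hab)
  set en := G.edgeFinset.equivFinOfCardEq hcard with hen
  have key : ∀ e : Sym2 (Fin d), e ∈ G.edgeSet → ∃ ab : Fin d × Fin d,
      s(ab.1, ab.2) = e ∧ G.Adj ab.1 ab.2 ∧ τ ab.2 < τ ab.1 := by
    intro e
    induction e using Sym2.ind with
    | _ x y =>
      intro hxy
      have hadj : G.Adj x y := hxy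
      have hne : τ x ≠ τ y := fun hc => hadj.ne (hτinj hc)
      rcases lt_or_gt_of_ne hne with h | h
      · exact ⟨(y, x), Sym2.eq_swap, hadj.symm, h⟩
      · exact ⟨(x, y), rfl, hadj, h⟩
  have hch : ∀ s : Fin d, ∃ ab : Fin d × Fin d,
      s(ab.1, ab.2) = (en.symm s : Sym2 (Fin d)) ∧ G.Adj ab.1 ab.2 ∧ τ ab.2 < τ ab.1 :=
    fun s => key _ (SimpleGraph.mem_edgeFinset.mp (en.symm s).2)
  set A : Fin d → Fin d := fun s => (Classical.choose (hch s)).1 with hA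
  set B : Fin d → Fin d := fun s => (Classical.choose (hch s)).2 with hB
  have hs1 : ∀ s, s(A s, B s) = (en.symm s : Sym2 (Fin d)) :=
    fun s => (Classical.choose_spec (hch s)).1
  have hs2 : ∀ s, G.Adj (A s) (B s) := fun s => (Classical.choose_spec (hch s)).2.1
  have hs3 : ∀ s, τ (B s) < τ (A s) := fun s => (Classical.choose_spec (hch s)).2.2
  -- joint injectivity
  have hABinj : ∀ a b, A a = A b → B a = B b → a = b := by
    intro a b h1 h2
    have h3 : (en.symm a : Sym2 (Fin d)) = (en.symm b : Sym2 (Fin d)) := by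
      rw [← hs1, ← hs1, h1, h2]
    exact en.symm.injective (Subtype.ext h3)
  have hA_pos : ∀ s, τ (A s) ≠ 0 := by
    intro s
    have := hs3 s
    omega
  -- surjectivity of A onto non-root vertices
  have hA_surj : ∀ v, τ v ≠ 0 → ∃ s, A s = v := by
    intro v hv
    have hsidx : σ.symm v ≠ 0 := by
      intro hc
      apply hv
      rw [hτ]
      simp [hc]
    obtain ⟨s', hlt, hadj⟩ := hσ (σ.symm v) hsidx
    rw [σ.apply_symm_apply] at hadj
    have hτu : τ (σ s') < τ v := by
      simp only [hτ, Equiv.symm_apply_apply]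
      exact hlt
    have he : s(σ s', v) ∈ G.edgeFinset := SimpleGraph.mem_edgeFinset.mpr hadj
    have h1 := hs1 (en ⟨_, he⟩)
    rw [Equiv.symm_apply_apply] at h1
    rcases Sym2.eq_iff.mp h1 with ⟨h2, h3⟩ | ⟨h2, h3⟩
    · exfalso
      have := hs3 (en ⟨_, he⟩)
      rw [h2, h3] at this
      omega
    · exact ⟨en ⟨_, he⟩, h2⟩
  -- A is not injective
  have hτσ0 : τ (σ 0) = 0 := by simp [hτ]
  have hnotinj : ¬ Function.Injective A := by
    intro hinjA
    obtain ⟨s, hsv⟩ := Finite.surjective_of_injective hinjA (σ 0)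
    exact hA_pos s (by rw [hsv, hτσ0])
  obtain ⟨s₁, s₂, hA12, hne12⟩ := Function.not_injective_iff.mp hnotinj
  -- image of A
  have himage : Finset.image A Finset.univ = Finset.univ.erase (σ 0) := by
    ext v
    simp only [Finset.mem_image, Finset.mem_univ, true_and, Finset.mem_erase, and_true]
    constructor
    · rintro ⟨s, rfl⟩
      intro hc
      exact hA_pos s (by rw [hc, hτσ0])
    · intro hvne
      refine hA_surj v fun hτ0 => hvne ?_
      have : σ.symm v = 0 := Fin.ext hτ0
      rw [← this, σ.apply_symm_apply]
  have hcardim : (Finset.image A Finset.univ).card = d - 1 := by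
    rw [himage, Finset.card_erase_of_mem (Finset.mem_univ _), Finset.card_univ,
      Fintype.card_fin]
  have himage2 : Finset.image A (Finset.univ.erase s₂) = Finset.image A Finset.univ := by
    apply Finset.Subset.antisymm
    · exact Finset.image_subset_image (Finset.erase_subset _ _)
    · intro v hv
      simp only [Finset.mem_image, Finset.mem_univ, true_and, Finset.mem_erase] at hv ⊢
      obtain ⟨s, hs⟩ := hv
      by_cases hss : s = s₂
      · exact ⟨s₁, ⟨hne12, trivial⟩, by rw [hA12, ← hss, hs]⟩
      · exact ⟨s, ⟨hss, trivial⟩, hs⟩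
  have hinjOn : Set.InjOn A (Finset.univ.erase s₂) := by
    apply Finset.injOn_of_card_image_eq
    rw [himage2, hcardim, Finset.card_erase_of_mem (Finset.mem_univ _), Finset.card_univ,
      Fintype.card_fin]
  have hpair : ∀ a b, A a = A b → a ≠ b → (a = s₁ ∧ b = s₂) ∨ (a = s₂ ∧ b = s₁) := by
    intro a b hab hne
    have hmem : ∀ x : Fin d, x ≠ s₂ → x ∈ (Finset.univ.erase s₂ : Finset (Fin d)) :=
      fun x hx => Finset.mem_erase.mpr ⟨hx, Finset.mem_univ _⟩
    by_cases ha : a = s₂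
    · right
      refine ⟨ha, ?_⟩
      have hb : b ≠ s₂ := fun hc => hne (ha.trans hc.symm)
      have : A b = A s₁ := by rw [← hab, ha, ← hA12]
      exact hinjOn (hmem b hb) (hmem s₁ hne12) this
    · by_cases hb : b = s₂
      · left
        refine ⟨?_, hb⟩
        have : A a = A s₁ := by rw [hab, hb, ← hA12]
        exact hinjOn (hmem a ha) (hmem s₁ hne12) this
      · exact absurd (hinjOn (hmem a ha) (hmem b hb) hab) hne
  have hfilterA : ∀ s, s ≠ s₁ → s ≠ s₂ →
      Finset.univ.filter (fun x => A x = A s) = {s} := by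
    intro s h1 h2
    ext x
    simp only [Finset.mem_filter, Finset.mem_univ, true_and, Finset.mem_singleton]
    constructor
    · intro hx
      by_contra hxs
      rcases hpair x s hx hxs with ⟨-, h⟩ | ⟨-, h⟩
      · exact h2 h
      · exact h1 h
    · rintro rfl; rfl
  -- marginals
  have margA : ∀ (p : Fin d → ℕ) (v : Fin d),
      (∑ s, p s • uu (A s) (B s)) (Sum.inl v)
        = ∑ s ∈ Finset.univ.filter (fun x => A x = v), p s := by
    intro p v
    rw [Finsupp.finset_sum_apply, Finset.sum_filter]
    refine Finset.sum_congr rfl fun s _ => ?_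
    rw [Finsupp.smul_apply, uu_apply_inl, smul_eq_mul]
    by_cases h : A s = v <;> simp [h]
  have margB : ∀ (p : Fin d → ℕ) (v : Fin d),
      (∑ s, p s • uu (A s) (B s)) (Sum.inr v)
        = ∑ s ∈ Finset.univ.filter (fun x => B x = v), p s := by
    intro p v
    rw [Finsupp.finset_sum_apply, Finset.sum_filter]
    refine Finset.sum_congr rfl fun s _ => ?_
    rw [Finsupp.smul_apply, uu_apply_inr, smul_eq_mul]
    by_cases h : B s = v <;> simp [h]
  refine ⟨τ, A, B, hs2, hs3, ?_, ?_⟩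
  · -- edge surjectivity
    intro i j hij
    have he : s(i, j) ∈ G.edgeFinset := SimpleGraph.mem_edgeFinset.mpr hij
    have h1 := hs1 (en ⟨_, he⟩)
    rw [Equiv.symm_apply_apply] at h1
    rcases Sym2.eq_iff.mp h1 with ⟨h2, h3⟩ | ⟨h2, h3⟩
    · exact ⟨en ⟨_, he⟩, Or.inl ⟨h2, h3⟩⟩
    · exact ⟨en ⟨_, he⟩, Or.inr ⟨h2, h3⟩⟩
  · -- injectivity of the marginal map
    intro p q hpq
    have hval : ∀ s, s ≠ s₁ → s ≠ s₂ → p s = q s := by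
      intro s h1 h2
      have h := DFunLike.congr_fun hpq (Sum.inl (A s))
      rw [margA, margA, hfilterA s h1 h2, Finset.sum_singleton, Finset.sum_singleton] at h
      exact h
    have hBne : B s₁ ≠ B s₂ := fun hc => hne12 (hABinj s₁ s₂ hA12 hc)
    have hone : ∀ sa sb : Fin d, B sa ≠ B sb →
        (∀ x, x ≠ sa → x ≠ sb → p x = q x) → p sa = q sa := by
      intro sa sb hBnee hvalx
      have h := DFunLike.congr_fun hpq (Sum.inr (B sa))
      rw [margB, margB] at h
      have hmem : sa ∈ Finset.univ.filter (fun x => B x = B sa) := by simp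
      rw [← Finset.add_sum_erase _ _ hmem, ← Finset.add_sum_erase _ _ hmem] at h
      have heq : ∀ x ∈ (Finset.univ.filter (fun x => B x = B sa)).erase sa,
          p x = q x := by
        intro x hx
        have hx1 := (Finset.mem_erase.mp hx).1
        have hxB : B x = B sa := by
          have := (Finset.mem_erase.mp hx).2
          simpa using this
        exact hvalx x hx1 (fun hc => hBnee (by rw [← hc, hxB]))
      have hSS : (∑ x ∈ (Finset.univ.filter (fun x => B x = B sa)).erase sa, p x)
          = ∑ x ∈ (Finset.univ.filter (fun x => B x = B sa)).erase sa, q x :=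
        Finset.sum_congr rfl heq
      omega
    have hkey : ∀ sa : Fin d, (sa = s₁ ∨ sa = s₂) → p sa = q sa := by
      rintro sa (h | h)
      · rw [h]; exact hone s₁ s₂ hBne (fun x h1 h2 => hval x h1 h2)
      · rw [h]; exact hone s₂ s₁ hBne.symm (fun x h2 h1 => hval x h1 h2)
    funext s
    by_cases h1 : s = s₁
    · exact h1 ▸ hkey s₁ (Or.inl rfl)
    · by_cases h2 : s = s₂
      · exact h2 ▸ hkey s₂ (Or.inr rfl)
      · exact hval s h1 h2
end BER

/-- **Example 4.3 (ii).** If `G` is a unicyclic graph on `d` vertices (a finite simple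
connected graph with exactly one cycle, equivalently a connected graph with exactly `d`
edges), then `R(G)` is isomorphic as a `k`-algebra to a polynomial ring in `d` variables. -/
theorem binomialEdgeRing_of_unicyclic (k : Type*) [Field k]
    (d : ℕ) (G : SimpleGraph (Fin d)) [Fintype G.edgeSet]
    (hconn : G.Connected) (hcard : G.edgeFinset.card = d) :
    Nonempty ((binomialEdgeRing k G) ≃ₐ[k] MvPolynomial (Fin d) k) := by
  classical
  obtain ⟨t, A, B, hadj, ht, hsurj, hinj⟩ := BER.exists_orient G hconn hcard
  have hAI : AlgebraicIndependent k (BER.FF k A B) := BER.algIndep t A B ht hinj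
  have hadjoin : binomialEdgeRing k G = Algebra.adjoin k (Set.range (BER.FF k A B)) := by
    rw [binomialEdgeRing]
    apply le_antisymm
    · apply Algebra.adjoin_le
      rintro p ⟨i, j, hij, rfl⟩
      obtain ⟨s, hs⟩ := hsurj i j hij
      rcases hs with ⟨h1, h2⟩ | ⟨h1, h2⟩
      · apply Algebra.subset_adjoin
        exact ⟨s, by rw [BER.FF, h1, h2]⟩
      · have hneg : (X (Sum.inl i) * X (Sum.inr j) - X (Sum.inl j) * X (Sum.inr i)
            : MvPolynomial (Fin d ⊕ Fin d) k) = - BER.FF k A B s := by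
          rw [BER.FF, h1, h2]; ring
        rw [hneg]
        exact neg_mem (Algebra.subset_adjoin ⟨s, rfl⟩)
    · apply Algebra.adjoin_le
      rintro p ⟨s, rfl⟩
      exact Algebra.subset_adjoin ⟨A s, B s, hadj s, rfl⟩
  exact ⟨(Subalgebra.equivOfEq _ _ hadjoin).trans hAI.aevalEquiv.symm⟩
end

section
/- Let G_2 be the bipartite graph on vertex set {1,…,8} with edge set {{1,2}, {2,3}, {3,4}, {4,5}, {5,6}, {1,4}, {1,6}, {2,5}, {3,6}, {6,7}, {7,8}, {5,8}}. Then the Krull dimension of the binomial edge ring R(G_2) over k = ℚ equals 11; in particular, it is strictly smaller than min{n, 2d−4} = 12, where d = 8 is the number of vertices and n = 12 is the number of edges of G_2. -/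
open MvPolynomial
set_option linter.unusedSectionVars false
universe uA

/-- The bipartite graph `G_2` of Example 4.4 (ii), on vertex set `{1,…,8}` (here `0,…,7`),
with edges `{1,2},{2,3},{3,4},{4,5},{5,6},{1,4},{1,6},{2,5},{3,6},{6,7},{7,8},{5,8}`. -/
def G2 : SimpleGraph (Fin 8) :=
  SimpleGraph.fromEdgeSet
    {s(0, 1), s(1, 2), s(2, 3), s(3, 4), s(4, 5), s(0, 3), s(0, 5), s(1, 4),
      s(2, 5), s(5, 6), s(6, 7), s(4, 7)}


section NoBigIndep
variable {k : Type*} [Field k] {S : Type*} [CommRing S] [IsDomain S] [Algebra k S]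

/-- span of products of the `f i` with all exponents at most `E`. -/
noncomputable def powSpan (f : Fin n → S) (E : ℕ) : Submodule k S :=
  Submodule.span k (Set.range (fun β : Fin n → Fin (E+1) => ∏ i, f i ^ (β i : ℕ)))

namespace powSpan
variable {n : ℕ} (f : Fin n → S)

lemma mono {E E' : ℕ} (h : E ≤ E') : powSpan (k := k) f E ≤ powSpan f E' := by
  apply Submodule.span_le.2
  rintro _ ⟨β, rfl⟩
  exact Submodule.subset_span ⟨fun i => Fin.castLE (by omega) (β i), rfl⟩

lemma one_mem (E : ℕ) : (1 : S) ∈ powSpan (k := k) f E := by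
  have : (1 : S) = ∏ i : Fin n, f i ^ ((0 : Fin (E+1)) : ℕ) := by simp
  rw [this]
  exact Submodule.subset_span ⟨0, rfl⟩

lemma mul_mem {E₁ E₂ : ℕ} {x y : S} (hx : x ∈ powSpan (k := k) f E₁)
    (hy : y ∈ powSpan (k := k) f E₂) : x * y ∈ powSpan (k := k) f (E₁ + E₂) := by
  have h : powSpan (k := k) f E₁ * powSpan (k := k) f E₂ ≤ powSpan f (E₁ + E₂) := by
    rw [powSpan, powSpan, Submodule.span_mul_span]
    apply Submodule.span_le.2
    rintro _ ⟨_, ⟨β, rfl⟩, _, ⟨γ, rfl⟩, rfl⟩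
    refine Submodule.subset_span ⟨fun i => ⟨(β i : ℕ) + (γ i : ℕ), by omega⟩, ?_⟩
    simp [← Finset.prod_mul_distrib, pow_add]
  exact h (Submodule.mul_mem_mul hx hy)

lemma pow_mem {E m : ℕ} {x : S} (hx : x ∈ powSpan (k := k) f E) :
    x ^ m ∈ powSpan (k := k) f (m * E) := by
  induction m with
  | zero => simpa using one_mem f 0
  | succ m ih =>
      have := mul_mem f ih hx
      rw [pow_succ]
      convert this using 2
      ring

lemma single_mem (j : Fin n) : f j ∈ powSpan (k := k) f 1 := by
  refine Submodule.subset_span ⟨fun i => if i = j then 1 else 0, ?_⟩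
  dsimp only
  rw [Finset.prod_eq_single j]
  · simp
  · intro b _ hb
    simp [hb]
  · simp

lemma aeval_mem (P : MvPolynomial (Fin n) k) : ∃ E, aeval f P ∈ powSpan (k := k) f E := by
  induction P using MvPolynomial.induction_on with
  | C a =>
      refine ⟨0, ?_⟩
      rw [aeval_C, Algebra.algebraMap_eq_smul_one]
      exact Submodule.smul_mem _ _ (one_mem f 0)
  | add p q hp hq =>
      obtain ⟨E₁, h₁⟩ := hp
      obtain ⟨E₂, h₂⟩ := hq
      refine ⟨max E₁ E₂, ?_⟩
      rw [map_add]
      exact Submodule.add_mem _ (mono f (le_max_left _ _) h₁) (mono f (le_max_right _ _) h₂)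
  | mul_X p j hp =>
      obtain ⟨E, hE⟩ := hp
      refine ⟨E + 1, ?_⟩
      rw [map_mul, aeval_X]
      exact mul_mem f hE (single_mem f j)

lemma prod_mem {ι : Type*} (s : Finset ι) (g : ι → S) (e : ι → ℕ)
    (h : ∀ i ∈ s, g i ∈ powSpan (k := k) f (e i)) :
    (∏ i ∈ s, g i) ∈ powSpan (k := k) f (∑ i ∈ s, e i) := by
  classical
  induction s using Finset.induction_on with
  | empty => simpa using one_mem f 0
  | insert _ _ hnotmem ih =>
      rw [Finset.prod_insert hnotmem, Finset.sum_insert hnotmem]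
      exact mul_mem f (h _ (Finset.mem_insert_self _ _))
        (ih fun i hi => h i (Finset.mem_insert_of_mem hi))

lemma finrank_le (E : ℕ) [DecidableEq S] :
    Module.finrank k (powSpan (k := k) f E) ≤ (E+1)^n := by
  refine le_trans (finrank_span_le_card _) ?_
  rw [Set.toFinset_range]
  refine le_trans (Finset.card_image_le) ?_
  simp [Fintype.card_fun]

end powSpan
end NoBigIndep

section Main
variable {k : Type*} [Field k] {S : Type*} [CommRing S] [IsDomain S] [Algebra k S]

/-- If `f : Fin (n+1) → S` satisfies a relation `H(f') * f_last = G(f')` with `H(f') ≠ 0`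
(where `f' = f ∘ castSucc`), then there is no algebraically independent family of `n+1`
elements inside `Algebra.adjoin k (Set.range f)`. -/
theorem no_big_indep {n : ℕ} (f : Fin (n+1) → S)
    (H G : MvPolynomial (Fin n) k)
    (hH : aeval (fun i : Fin n => f i.castSucc) H ≠ 0)
    (hrel : aeval (fun i : Fin n => f i.castSucc) H * f (Fin.last n)
      = aeval (fun i : Fin n => f i.castSucc) G)
    (a : Fin (n+1) → S) (ha : ∀ i, a i ∈ Algebra.adjoin k (Set.range f)) :
    ¬ AlgebraicIndependent k a := by
  classical
  intro hind
  set f' : Fin n → S := fun i => f i.castSucc with hf'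
  set h : S := aeval f' H with hh
  have key : ∀ x ∈ Algebra.adjoin k (Set.range f),
      ∃ c E, h ^ c * x ∈ powSpan (k := k) f' E := by
    intro x hx
    induction hx using Algebra.adjoin_induction with
    | mem x hx =>
        obtain ⟨i, rfl⟩ := hx
        induction i using Fin.lastCases with
        | last =>
            obtain ⟨E, hE⟩ := powSpan.aeval_mem (k := k) f' G
            exact ⟨1, E, by rw [pow_one, hrel]; exact hE⟩
        | cast j =>
            exact ⟨0, 1, by rw [pow_zero, one_mul]; exact powSpan.single_mem f' j⟩
    | algebraMap r =>
        refine ⟨0, 0, ?_⟩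
        rw [pow_zero, one_mul, Algebra.algebraMap_eq_smul_one]
        exact Submodule.smul_mem _ _ (powSpan.one_mem f' 0)
    | add x y hx hy ihx ihy =>
        obtain ⟨c₁, E₁, h₁⟩ := ihx
        obtain ⟨c₂, E₂, h₂⟩ := ihy
        obtain ⟨Eh, hEh⟩ := powSpan.aeval_mem (k := k) f' H
        refine ⟨c₁ + c₂, max (c₂ * Eh + E₁) (c₁ * Eh + E₂), ?_⟩
        have e1 : h ^ (c₁ + c₂) * (x + y) = h ^ c₂ * (h ^ c₁ * x) + h ^ c₁ * (h ^ c₂ * y) := by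
          ring
        rw [e1]
        refine Submodule.add_mem _ ?_ ?_
        · exact powSpan.mono f' (le_max_left _ _)
            (powSpan.mul_mem f' (powSpan.pow_mem f' hEh) h₁)
        · exact powSpan.mono f' (le_max_right _ _)
            (powSpan.mul_mem f' (powSpan.pow_mem f' hEh) h₂)
    | mul x y hx hy ihx ihy =>
        obtain ⟨c₁, E₁, h₁⟩ := ihx
        obtain ⟨c₂, E₂, h₂⟩ := ihy
        refine ⟨c₁ + c₂, E₁ + E₂, ?_⟩
        have e1 : h ^ (c₁ + c₂) * (x * y) = (h ^ c₁ * x) * (h ^ c₂ * y) := by ring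
        rw [e1]
        exact powSpan.mul_mem f' h₁ h₂
  choose c E hcE using fun i => key (a i) (ha i)
  obtain ⟨Eh, hEh⟩ := powSpan.aeval_mem (k := k) f' H
  set c' : ℕ := Finset.univ.sup c with hc'
  set μ : ℕ := Eh * c' + Finset.univ.sup E + 1 with hμ
  have key2 : ∀ i, h ^ c' * a i ∈ powSpan (k := k) f' μ := by
    intro i
    have hci : c i ≤ c' := Finset.le_sup (Finset.mem_univ i)
    have hEi : E i ≤ Finset.univ.sup E := Finset.le_sup (Finset.mem_univ i)
    have h1 : h ^ c' * a i = h ^ (c' - c i) * (h ^ c i * a i) := by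
      rw [← mul_assoc, ← pow_add, Nat.sub_add_cancel hci]
    rw [h1]
    refine powSpan.mono f' ?_ (powSpan.mul_mem f' (powSpan.pow_mem f' hEh) (hcE i))
    have : (c' - c i) * Eh ≤ Eh * c' := by
      calc (c' - c i) * Eh ≤ c' * Eh := Nat.mul_le_mul_right _ (Nat.sub_le _ _)
        _ = Eh * c' := Nat.mul_comm _ _
    omega
  -- the contradiction via counting, for arbitrary D
  have main : ∀ D : ℕ, (D+1)^(n+1) ≤ (μ * ((n+1) * D) + 1)^n := by
    intro D
    set N : ℕ := μ * ((n+1) * D) with hN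
    set b : (Fin (n+1) → Fin (D+1)) → S :=
      fun α => h ^ (c' * ((n+1) * D)) * ∏ i, a i ^ (α i : ℕ) with hb
    have hmem : ∀ α, b α ∈ powSpan (k := k) f' N := by
      intro α
      have hfac : ∀ i : Fin (n+1), h ^ (c' * D) * a i ^ (α i : ℕ)
          ∈ powSpan (k := k) f' (D * μ) := by
        intro i
        have e2 : h ^ (c' * D) * a i ^ (α i : ℕ)
            = (h ^ c') ^ (D - (α i : ℕ)) * (h ^ c' * a i) ^ (α i : ℕ) := by
          rw [mul_pow, ← pow_mul, ← mul_assoc, ← pow_mul, ← pow_add]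
          have hle : (α i : ℕ) ≤ D := Nat.lt_succ_iff.mp (α i).isLt
          congr 2
          rw [← Nat.mul_add, Nat.sub_add_cancel hle]
        rw [e2]
        have m1 : (h ^ c') ^ (D - (α i : ℕ)) ∈ powSpan (k := k) f' ((D - (α i:ℕ)) * (c' * Eh)) :=
          powSpan.pow_mem f' (powSpan.pow_mem f' hEh)
        have m2 : (h ^ c' * a i) ^ (α i : ℕ) ∈ powSpan (k := k) f' ((α i : ℕ) * μ) :=
          powSpan.pow_mem f' (key2 i)
        have := powSpan.mul_mem f' m1 m2
        refine powSpan.mono f' ?_ this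
        have hle : (α i : ℕ) ≤ D := Nat.lt_succ_iff.mp (α i).isLt
        have h3 : c' * Eh ≤ μ := by rw [hμ, Nat.mul_comm Eh c']; omega
        calc (D - (α i:ℕ)) * (c' * Eh) + (α i:ℕ) * μ
            ≤ (D - (α i:ℕ)) * μ + (α i:ℕ) * μ := by
              exact Nat.add_le_add_right (Nat.mul_le_mul_left _ h3) _
          _ = D * μ := by rw [← Nat.add_mul, Nat.sub_add_cancel hle]
      have e3 : b α = ∏ i : Fin (n+1), (h ^ (c' * D) * a i ^ (α i : ℕ)) := by
        rw [hb, Finset.prod_mul_distrib, Finset.prod_const, Finset.card_univ,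
          Fintype.card_fin, ← pow_mul]
        congr 2
        ring
      rw [e3]
      have := powSpan.prod_mem f' Finset.univ (fun i => h ^ (c' * D) * a i ^ (α i : ℕ))
        (fun _ => D * μ) (fun i _ => hfac i)
      refine powSpan.mono f' ?_ this
      rw [Finset.sum_const, Finset.card_univ, Fintype.card_fin, smul_eq_mul, hN]
      ring_nf
      omega
    -- linear independence of b
    have hbli : LinearIndependent k b := by
      have hinj : Function.Injective
          (fun α : Fin (n+1) → Fin (D+1) => Finsupp.equivFunOnFinite.symm
            (fun i => ((α i : ℕ)) )) := by
        intro α β hEq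
        funext i
        have := congrArg (fun g => (Finsupp.equivFunOnFinite g) i) hEq
        simp only [Equiv.apply_symm_apply] at this
        exact Fin.ext this
      have li0 : LinearIndependent k
          (fun α : Fin (n+1) → Fin (D+1) => (MvPolynomial.basisMonomials (Fin (n+1)) k)
            (Finsupp.equivFunOnFinite.symm (fun i => (α i : ℕ)))) :=
        (MvPolynomial.basisMonomials (Fin (n+1)) k).linearIndependent.comp _ hinj
      have li1 := li0.map' (aeval a).toLinearMap
        (LinearMap.ker_eq_bot.2 (algebraicIndependent_iff_injective_aeval.mp hind))
      have li2 := li1.map' (LinearMap.mulLeft k (h ^ (c' * ((n+1) * D))))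
        (LinearMap.ker_eq_bot.2 (mul_right_injective₀ (pow_ne_zero _ hH)))
      convert li2 using 1
      funext α
      simp only [hb, Function.comp_apply, LinearMap.mulLeft_apply, AlgHom.toLinearMap_apply,
        MvPolynomial.coe_basisMonomials]
      congr 1
      rw [aeval_monomial, Finsupp.prod_fintype _ _ (fun i => pow_zero _)]
      simp [Finsupp.equivFunOnFinite]
      rfl
      rfl
    -- counting
    have hsub : ∀ α, b α ∈ powSpan (k := k) f' N := hmem
    set V := powSpan (k := k) f' N with hV
    have : FiniteDimensional k V := by
      apply FiniteDimensional.span_of_finite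
      exact Set.finite_range _
    have hb' : LinearIndependent k (fun α => (⟨b α, hsub α⟩ : V)) := by
      apply LinearIndependent.of_comp V.subtype
      convert hbli using 1
      rfl
    have hcard := hb'.fintype_card_le_finrank
    rw [Fintype.card_fun, Fintype.card_fin, Fintype.card_fin] at hcard
    calc (D+1)^(n+1) ≤ Module.finrank k V := hcard
      _ ≤ (N+1)^n := powSpan.finrank_le f' N
  -- numeric contradiction
  set κ : ℕ := μ * (n+1) with hκ
  set D : ℕ := (κ + 1)^n with hD
  have h1 : (D+1)^(n+1) ≤ (κ * D + 1)^n := by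
    have := main D
    have e : μ * ((n+1) * D) = κ * D := by rw [hκ]; ring
    rwa [e] at this
  have h2 : (κ * D + 1)^n ≤ ((κ+1) * (D+1))^n := by
    apply Nat.pow_le_pow_left
    calc κ * D + 1 ≤ κ * D + κ + D + 1 := by omega
      _ = (κ+1) * (D+1) := by ring
  have h3 : ((κ+1) * (D+1))^n = D * (D+1)^n := by
    rw [Nat.mul_pow, hD]
  have h4 : D * (D+1)^n < (D+1)^(n+1) := by
    rw [pow_succ, Nat.mul_comm ((D+1)^n) (D+1)]
    exact (Nat.mul_lt_mul_right (Nat.pow_pos (by omega))).mpr (by omega)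
  omega

end Main



section Chain
variable {k : Type*} [Field k]

/-- `aeval` at `Fin.cons f y` factors through `finSuccEquiv`. -/
lemma aeval_cons_eq_eval₂ {A : Type*} [CommRing A] [Algebra k A] {n : ℕ}
    (f : A) (y : Fin n → A) (P : MvPolynomial (Fin (n+1)) k) :
    aeval (Fin.cons f y) P =
      Polynomial.eval₂ ((aeval y : MvPolynomial (Fin n) k →ₐ[k] A) : MvPolynomial (Fin n) k →+* A)
        f (finSuccEquiv k n P) := by
  have hcomp : (Polynomial.eval₂RingHom
        ((aeval y : MvPolynomial (Fin n) k →ₐ[k] A) : MvPolynomial (Fin n) k →+* A) f).comp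
        ((finSuccEquiv k n : MvPolynomial (Fin (n+1)) k ≃ₐ[k] _) :
          MvPolynomial (Fin (n+1)) k →+* Polynomial (MvPolynomial (Fin n) k)) =
      ((aeval (Fin.cons f y) : MvPolynomial (Fin (n+1)) k →ₐ[k] A) :
        MvPolynomial (Fin (n+1)) k →+* A) := by
    apply MvPolynomial.ringHom_ext
    · intro a
      simp [finSuccEquiv_apply, Polynomial.eval₂_C]
    · intro i
      induction i using Fin.cases with
      | zero => simp [finSuccEquiv_X_zero]
      | succ j => simp [finSuccEquiv_X_succ]
  have := congrArg (fun (g : MvPolynomial (Fin (n+1)) k →+* A) => g P) hcomp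
  simpa using this.symm

/-- Adding an element of a nonzero prime to (a lift of) an independent family stays
independent. -/
lemma indep_cons {A : Type*} [CommRing A] [IsDomain A] [Algebra k A] {n : ℕ}
    {p : Ideal A} [p.IsPrime] {f : A} (hf : f ∈ p) (hf0 : f ≠ 0) {y : Fin n → A}
    (hy : AlgebraicIndependent k (fun i => Ideal.Quotient.mk p (y i))) :
    AlgebraicIndependent k (Fin.cons f y : Fin (n+1) → A) := by
  rw [algebraicIndependent_iff]
  intro P hP
  by_contra hP0
  set P' : Polynomial (MvPolynomial (Fin n) k) := finSuccEquiv k n P with hP'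
  have hP'0 : P' ≠ 0 := by
    intro h0
    exact hP0 ((map_eq_zero_iff _ (finSuccEquiv k n).injective).mp h0)
  set s : ℕ := P'.natTrailingDegree with hs
  have hdvd : (Polynomial.X : Polynomial (MvPolynomial (Fin n) k)) ^ s ∣ P' := by
    rw [Polynomial.X_pow_dvd_iff]
    intro d hd
    exact Polynomial.coeff_eq_zero_of_lt_natTrailingDegree hd
  obtain ⟨Q, hQ⟩ := hdvd
  have hQ0 : Q.coeff 0 = P'.trailingCoeff := by
    have : P'.coeff s = Q.coeff 0 := by
      rw [hQ]
      simpa using (Polynomial.coeff_X_pow_mul Q s 0)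
    rw [← this]
    rfl
  have htc : P'.trailingCoeff ≠ 0 := Polynomial.trailingCoeff_nonzero_iff_nonzero.mpr hP'0
  -- evaluate
  have heval : Polynomial.eval₂
      ((aeval y : MvPolynomial (Fin n) k →ₐ[k] A) : MvPolynomial (Fin n) k →+* A) f P' = 0 := by
    rw [← aeval_cons_eq_eval₂ f y P, hP]
  rw [hQ, Polynomial.eval₂_mul, Polynomial.eval₂_X_pow] at heval
  have hQeval : Polynomial.eval₂
      ((aeval y : MvPolynomial (Fin n) k →ₐ[k] A) : MvPolynomial (Fin n) k →+* A) f Q = 0 :=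
    by_contra fun hne => (pow_ne_zero s hf0) (by
      rcases mul_eq_zero.mp heval with h | h
      · exact h
      · exact absurd h hne)
  -- push to the quotient
  have hπ := congrArg (Ideal.Quotient.mk p) hQeval
  rw [Polynomial.hom_eval₂, map_zero] at hπ
  have hπf : Ideal.Quotient.mk p f = 0 := (Ideal.Quotient.eq_zero_iff_mem).mpr hf
  rw [hπf, Polynomial.eval₂_at_zero] at hπ
  -- identify the composed hom with aeval of the reduced family
  have hcomp : (Ideal.Quotient.mk p).comp
      ((aeval y : MvPolynomial (Fin n) k →ₐ[k] A) : MvPolynomial (Fin n) k →+* A)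
      = ((aeval (fun i => Ideal.Quotient.mk p (y i)) :
          MvPolynomial (Fin n) k →ₐ[k] A ⧸ p) : MvPolynomial (Fin n) k →+* A ⧸ p) := by
    apply MvPolynomial.ringHom_ext
    · intro a
      simp
    · intro i
      simp
  rw [hcomp] at hπ
  have := hy.eq_zero_of_aeval_eq_zero (Q.coeff 0) hπ
  rw [this] at hQ0
  exact htc hQ0.symm

/-- A strict chain of `m` nonzero primes in a domain yields `m` algebraically independent
elements. -/
lemma chain_to_indep : ∀ (m : ℕ) (A : Type uA) [CommRing A] [IsDomain A] [Algebra k A]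
    (q : Fin m → Ideal A), (∀ i, (q i).IsPrime) → StrictMono q → (∀ i, q i ≠ ⊥) →
    ∃ x : Fin m → A, AlgebraicIndependent k x := by
  intro m
  induction m with
  | zero =>
      intro A _ _ _ q _ _ _
      exact ⟨Fin.elim0, algebraicIndependent_empty_type⟩
  | succ m ih =>
      intro A _ _ _ q hprime hmono hne
      set p : Ideal A := q 0 with hp
      haveI : (q 0).IsPrime := hprime 0
      haveI : p.IsPrime := hprime 0
      set π := Ideal.Quotient.mk p with hπ
      have hsurj : Function.Surjective π := Ideal.Quotient.mk_surjective
      have hker : RingHom.ker π = p := Ideal.mk_ker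
      have hle : ∀ i : Fin m, p ≤ q i.succ := fun i =>
        le_of_lt (hmono (by simp [Fin.lt_def]))
      set q' : Fin m → Ideal (A ⧸ p) := fun i => Ideal.map π (q i.succ) with hq'
      have hcomap : ∀ i, Ideal.comap π (q' i) = q i.succ := by
        intro i
        rw [hq', Ideal.comap_map_of_surjective π hsurj]
        rw [← RingHom.ker_eq_comap_bot, hker]
        exact sup_eq_left.mpr (hle i)
      have hprime' : ∀ i, (q' i).IsPrime := by
        intro i
        haveI := hprime i.succ
        exact Ideal.map_isPrime_of_surjective hsurj (by rw [hker]; exact hle i)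
      have hmono' : StrictMono q' := by
        intro i j hij
        constructor
        · exact Ideal.map_mono (le_of_lt (hmono (Fin.succ_lt_succ_iff.mpr hij)))
        · intro hle'
          have : q' j ≤ q' i → q j.succ ≤ q i.succ := fun hh => by
            rw [← hcomap i, ← hcomap j]
            exact Ideal.comap_mono hh
          exact absurd (this hle') (not_le_of_gt (hmono (Fin.succ_lt_succ_iff.mpr hij)))
      have hne' : ∀ i, q' i ≠ ⊥ := by
        intro i h0
        have h1 : q i.succ = p := by
          rw [← hcomap i, h0, ← RingHom.ker_eq_comap_bot, hker]
        have h2 : p < q i.succ := hmono (Fin.succ_pos i)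
        rw [h1] at h2
        exact lt_irrefl p h2
      obtain ⟨y', hy'⟩ := ih (A ⧸ p) q' hprime' hmono' hne'
      choose y hy using fun i => hsurj (y' i)
      have hne0 : p ≠ ⊥ := hne 0
      obtain ⟨f, hfp, hf0⟩ := Submodule.exists_mem_ne_zero_of_ne_bot hne0
      refine ⟨Fin.cons f y, indep_cons hfp hf0 ?_⟩
      have h3 : (fun i => Ideal.Quotient.mk p (y i)) = y' := funext hy
      rw [h3]
      exact hy'
end Chain


section SpanX
variable {k : Type*} [Field k] {σ : Type*} (T : Set σ) [DecidablePred (· ∈ T)]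

noncomputable def killT : MvPolynomial σ k →ₐ[k] MvPolynomial σ k :=
  aeval (fun v => if v ∈ T then 0 else X v)

lemma killT_sub_mem (x : MvPolynomial σ k) : x - killT T x ∈ Ideal.span (X '' T) := by
  induction x using MvPolynomial.induction_on with
  | C a => simp [killT]
  | add p q hp hq =>
      have : p + q - killT T (p + q) = (p - killT T p) + (q - killT T q) := by
        rw [map_add]; ring
      rw [this]
      exact Ideal.add_mem _ hp hq
  | mul_X p i hp =>
      rw [map_mul]
      by_cases hi : i ∈ T
      · have hXi : killT T (X i) = (0 : MvPolynomial σ k) := by simp [killT, hi]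
        rw [hXi, mul_zero, sub_zero]
        exact Ideal.mul_mem_left _ p (Ideal.subset_span ⟨i, hi, rfl⟩)
      · have hXi : killT T (X i) = (X i : MvPolynomial σ k) := by simp [killT, hi]
        rw [hXi]
        have : p * X i - killT T p * X i = (p - killT T p) * X i := by ring
        rw [this]
        exact Ideal.mul_mem_right _ _ hp

lemma mem_spanX_iff (x : MvPolynomial σ k) :
    x ∈ Ideal.span (X '' T) ↔ killT T x = 0 := by
  constructor
  · intro hx
    have hker : Ideal.span (X '' T) ≤ RingHom.ker (killT T (k := k)).toRingHom := by
      rw [Ideal.span_le]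
      rintro _ ⟨v, hv, rfl⟩
      rw [SetLike.mem_coe, RingHom.mem_ker]
      simp [killT, hv]
    exact hker hx
  · intro hx
    have := killT_sub_mem T x
    rwa [hx, sub_zero] at this

lemma spanX_isPrime : (Ideal.span (X '' T) : Ideal (MvPolynomial σ k)).IsPrime := by
  constructor
  · intro h
    have h1 : (1 : MvPolynomial σ k) ∈ Ideal.span (X '' T) := h ▸ Submodule.mem_top
    rw [mem_spanX_iff, map_one] at h1
    exact one_ne_zero h1
  · intro a b hab
    rw [mem_spanX_iff, map_mul] at hab
    rcases mul_eq_zero.mp hab with h | h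
    · exact Or.inl ((mem_spanX_iff T a).mpr h)
    · exact Or.inr ((mem_spanX_iff T b).mpr h)

lemma termL_mem {u : σ} (v : σ) (hu : u ∈ T) :
    (X u * X v : MvPolynomial σ k) ∈ Ideal.span (X '' T) :=
  Ideal.mul_mem_right _ _ (Ideal.subset_span ⟨u, hu, rfl⟩)

lemma termR_mem (u : σ) {v : σ} (hv : v ∈ T) :
    (X u * X v : MvPolynomial σ k) ∈ Ideal.span (X '' T) :=
  Ideal.mul_mem_left _ _ (Ideal.subset_span ⟨v, hv, rfl⟩)

end SpanX

noncomputable abbrev SS : Type := MvPolynomial (Fin 8 ⊕ Fin 8) ℚ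

noncomputable def binom (i j : Fin 8) : SS :=
  X (Sum.inl i) * X (Sum.inr j) - X (Sum.inl j) * X (Sum.inr i)

noncomputable def fgen : Fin 12 → SS :=
  ![binom 0 1, binom 1 2, binom 2 3, binom 3 4, binom 4 5, binom 0 3,
    binom 0 5, binom 1 4, binom 5 6, binom 6 7, binom 4 7, binom 2 5]

-- test reductions
example : fgen 5 = binom 0 3 := rfl
example : fgen ((5 : Fin 11).castSucc) = binom 0 3 := rfl
example : fgen (Fin.last 11) = binom 2 5 := rfl
example : G2.Adj 0 1 := by
  rw [G2, SimpleGraph.fromEdgeSet_adj]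
  exact ⟨by decide, by decide⟩
example : s(0,1) ∈ ({s(0, 1), s(1, 2)} : Set (Sym2 (Fin 8))) := by decide

-- the key relation among the generators
lemma rel0 : (binom 0 3 * binom 1 4 - binom 0 1 * binom 3 4) * binom 2 5 =
    binom 0 1 * binom 2 3 * binom 4 5 + binom 1 2 * binom 3 4 * binom 0 5 +
    binom 1 2 * binom 4 5 * binom 0 3 + binom 2 3 * binom 0 5 * binom 1 4 := by
  simp only [binom]
  ring

-- H(f') ≠ 0 via evaluation at an explicit point
noncomputable def wpt : Fin 8 ⊕ Fin 8 → ℚ :=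
  Sum.elim (fun i => (i : ℚ) + 1) (fun i => ((i : ℚ) + 1)^2)

lemma hH0 : binom 0 3 * binom 1 4 - binom 0 1 * binom 3 4 ≠ 0 := by
  intro h0
  have := congrArg (eval wpt) h0
  simp only [binom, map_sub, map_mul, eval_X, map_zero, wpt, Sum.elim_inl, Sum.elim_inr,
    show ((0:Fin 8):ℕ) = 0 from rfl, show ((1:Fin 8):ℕ) = 1 from rfl,
    show ((3:Fin 8):ℕ) = 3 from rfl, show ((4:Fin 8):ℕ) = 4 from rfl] at this
  norm_num at this

def EdgSet : Set (Sym2 (Fin 8)) :=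
  {s(0, 1), s(1, 2), s(2, 3), s(3, 4), s(4, 5), s(0, 3), s(0, 5), s(1, 4),
    s(2, 5), s(5, 6), s(6, 7), s(4, 7)}

lemma G2_eq : G2 = SimpleGraph.fromEdgeSet EdgSet := rfl

lemma G2_adj_iff (a b : Fin 8) : G2.Adj a b ↔ s(a,b) ∈ EdgSet ∧ a ≠ b := by
  rw [G2_eq, SimpleGraph.fromEdgeSet_adj]

lemma mem_fwd (idx : Fin 12) (a b : Fin 8) (h : fgen idx = binom a b) :
    binom a b ∈ Algebra.adjoin ℚ (Set.range fgen) :=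
  h ▸ Algebra.subset_adjoin ⟨idx, rfl⟩

lemma mem_rev (idx : Fin 12) (a b : Fin 8) (h : fgen idx = binom a b) :
    binom b a ∈ Algebra.adjoin ℚ (Set.range fgen) := by
  have h2 : binom b a = -(fgen idx) := by
    rw [h, binom, binom]
    ring
  rw [h2]
  exact neg_mem (Algebra.subset_adjoin ⟨idx, rfl⟩)

def EdgFinset : Finset (Sym2 (Fin 8)) :=
  {s(0, 1), s(1, 2), s(2, 3), s(3, 4), s(4, 5), s(0, 3), s(0, 5), s(1, 4),
    s(2, 5), s(5, 6), s(6, 7), s(4, 7)}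

lemma edg_key : ∀ e : Sym2 (Fin 8), (e ∈ EdgSet ∧ ¬ e.IsDiag) ↔ e ∈ EdgFinset := by
  have : ∀ e : Sym2 (Fin 8),
      ((e = s(0,1) ∨ e = s(1,2) ∨ e = s(2,3) ∨ e = s(3,4) ∨ e = s(4,5) ∨ e = s(0,3) ∨
        e = s(0,5) ∨ e = s(1,4) ∨ e = s(2,5) ∨ e = s(5,6) ∨ e = s(6,7) ∨ e = s(4,7))
        ∧ ¬ e.IsDiag) ↔ e ∈ EdgFinset := by decide
  intro e
  rw [← this e]
  rw [EdgSet]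
  simp only [Set.mem_insert_iff, Set.mem_singleton_iff]

lemma G2_adj (a b : Fin 8) (h : s(a,b) ∈ EdgFinset) : G2.Adj a b := by
  rw [G2_adj_iff]
  have h2 := (edg_key s(a,b)).mpr h
  refine ⟨h2.1, ?_⟩
  intro hab
  exact h2.2 (by rw [hab]; exact Sym2.mk_isDiag_iff.mpr rfl)

lemma mem_bER (a b : Fin 8) (h : G2.Adj a b) : binom a b ∈ binomialEdgeRing ℚ G2 :=
  Algebra.subset_adjoin ⟨a, b, h, rfl⟩

lemma adjoin_eq : binomialEdgeRing ℚ G2 = Algebra.adjoin ℚ (Set.range fgen) := by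
  apply le_antisymm
  · apply Algebra.adjoin_le
    rintro p ⟨i, j, hadj, rfl⟩
    rw [G2_adj_iff] at hadj
    obtain ⟨hmem, hne⟩ := hadj
    rw [EdgSet] at hmem
    simp only [Set.mem_insert_iff, Set.mem_singleton_iff, Sym2.eq_iff] at hmem
    rcases hmem with (h|h|h|h|h|h|h|h|h|h|h|h) <;> rcases h with ⟨rfl,rfl⟩|⟨rfl,rfl⟩
    · exact mem_fwd 0 0 1 rfl
    · exact mem_rev 0 0 1 rfl
    · exact mem_fwd 1 1 2 rfl
    · exact mem_rev 1 1 2 rfl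
    · exact mem_fwd 2 2 3 rfl
    · exact mem_rev 2 2 3 rfl
    · exact mem_fwd 3 3 4 rfl
    · exact mem_rev 3 3 4 rfl
    · exact mem_fwd 4 4 5 rfl
    · exact mem_rev 4 4 5 rfl
    · exact mem_fwd 5 0 3 rfl
    · exact mem_rev 5 0 3 rfl
    · exact mem_fwd 6 0 5 rfl
    · exact mem_rev 6 0 5 rfl
    · exact mem_fwd 7 1 4 rfl
    · exact mem_rev 7 1 4 rfl
    · exact mem_fwd 11 2 5 rfl
    · exact mem_rev 11 2 5 rfl
    · exact mem_fwd 8 5 6 rfl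
    · exact mem_rev 8 5 6 rfl
    · exact mem_fwd 9 6 7 rfl
    · exact mem_rev 9 6 7 rfl
    · exact mem_fwd 10 4 7 rfl
    · exact mem_rev 10 4 7 rfl
  · apply Algebra.adjoin_le
    rintro p ⟨e, rfl⟩
    fin_cases e
    · exact mem_bER 0 1 (G2_adj 0 1 (by decide))
    · exact mem_bER 1 2 (G2_adj 1 2 (by decide))
    · exact mem_bER 2 3 (G2_adj 2 3 (by decide))
    · exact mem_bER 3 4 (G2_adj 3 4 (by decide))
    · exact mem_bER 4 5 (G2_adj 4 5 (by decide))
    · exact mem_bER 0 3 (G2_adj 0 3 (by decide))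
    · exact mem_bER 0 5 (G2_adj 0 5 (by decide))
    · exact mem_bER 1 4 (G2_adj 1 4 (by decide))
    · exact mem_bER 5 6 (G2_adj 5 6 (by decide))
    · exact mem_bER 6 7 (G2_adj 6 7 (by decide))
    · exact mem_bER 4 7 (G2_adj 4 7 (by decide))
    · exact mem_bER 2 5 (G2_adj 2 5 (by decide))

lemma edge_count : G2.edgeSet.ncard = 12 := by
  have h1 : G2.edgeSet = (EdgFinset : Set (Sym2 (Fin 8))) := by
    rw [G2_eq, SimpleGraph.edgeSet_fromEdgeSet]
    ext e
    rw [Set.mem_diff, Finset.mem_coe, ← edg_key e, Sym2.mem_diagSet]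
  rw [h1, Set.ncard_coe_finset]
  decide



abbrev Vars : Type := Fin 8 ⊕ Fin 8

/-- The increasing chain of variable sets used to build the chain of primes. -/
def Ts : Fin 12 → Finset Vars :=
  ![∅,
    {Sum.inl 6, Sum.inr 2, Sum.inr 3, Sum.inr 7},
    {Sum.inl 6, Sum.inr 1, Sum.inr 2, Sum.inr 3, Sum.inr 7},
    {Sum.inl 6, Sum.inr 0, Sum.inr 1, Sum.inr 2, Sum.inr 3, Sum.inr 7},
    {Sum.inl 5, Sum.inl 6, Sum.inr 0, Sum.inr 1, Sum.inr 2, Sum.inr 3, Sum.inr 7},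
    {Sum.inl 5, Sum.inl 6, Sum.inr 0, Sum.inr 1, Sum.inr 2, Sum.inr 3, Sum.inr 6, Sum.inr 7},
    {Sum.inl 5, Sum.inl 6, Sum.inl 7, Sum.inr 0, Sum.inr 1, Sum.inr 2, Sum.inr 3, Sum.inr 6,
      Sum.inr 7},
    {Sum.inl 4, Sum.inl 5, Sum.inl 6, Sum.inl 7, Sum.inr 0, Sum.inr 1, Sum.inr 2, Sum.inr 3,
      Sum.inr 6, Sum.inr 7},
    {Sum.inl 3, Sum.inl 4, Sum.inl 5, Sum.inl 6, Sum.inl 7, Sum.inr 0, Sum.inr 1, Sum.inr 2,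
      Sum.inr 3, Sum.inr 6, Sum.inr 7},
    {Sum.inl 1, Sum.inl 3, Sum.inl 4, Sum.inl 5, Sum.inl 6, Sum.inl 7, Sum.inr 0, Sum.inr 1,
      Sum.inr 2, Sum.inr 3, Sum.inr 4, Sum.inr 6, Sum.inr 7},
    {Sum.inl 1, Sum.inl 2, Sum.inl 3, Sum.inl 4, Sum.inl 5, Sum.inl 6, Sum.inl 7, Sum.inr 0,
      Sum.inr 1, Sum.inr 2, Sum.inr 3, Sum.inr 4, Sum.inr 6, Sum.inr 7},
    {Sum.inl 1, Sum.inl 2, Sum.inl 3, Sum.inl 4, Sum.inl 5, Sum.inl 6, Sum.inl 7, Sum.inr 0,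
      Sum.inr 1, Sum.inr 2, Sum.inr 3, Sum.inr 4, Sum.inr 5, Sum.inr 6, Sum.inr 7}]

lemma step_lt (T T' : Finset Vars) (hsub : T ⊆ T') (a b : Fin 8)
    (hadj : G2.Adj a b)
    (hmem : binom a b ∈ Ideal.span (X '' ((T' : Set Vars))))
    (h2 : Sum.inl a ∉ T) (h3 : Sum.inr b ∉ T) (hne : a ≠ b) :
    Ideal.comap (Subalgebra.val (binomialEdgeRing ℚ G2))
        (Ideal.span (X '' ((T : Set Vars)))) <
      Ideal.comap (Subalgebra.val (binomialEdgeRing ℚ G2))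
        (Ideal.span (X '' ((T' : Set Vars)))) := by
  rw [SetLike.lt_iff_le_and_exists]
  constructor
  · refine Ideal.comap_mono (Ideal.span_mono (Set.image_mono ?_))
    exact_mod_cast hsub
  · refine ⟨⟨binom a b, mem_bER a b hadj⟩, ?_, ?_⟩
    · rw [Ideal.mem_comap]
      exact hmem
    · intro hbad
      rw [Ideal.mem_comap] at hbad
      set w : Vars → ℚ := fun v => if v = Sum.inl a ∨ v = Sum.inr b then 1 else 0 with hw
      have hker : Ideal.span (X '' (T : Set Vars)) ≤ RingHom.ker (eval w) := by
        rw [Ideal.span_le]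
        rintro _ ⟨v, hv, rfl⟩
        rw [SetLike.mem_coe, RingHom.mem_ker, eval_X]
        have hv1 : v ≠ Sum.inl a := fun h => h2 (Finset.mem_coe.mp (h ▸ hv))
        have hv2 : v ≠ Sum.inr b := fun h => h3 (Finset.mem_coe.mp (h ▸ hv))
        simp [hw, hv1, hv2]
      replace hbad : binom a b ∈ Ideal.span (X '' (T : Set Vars)) := hbad
      have h0 := hker hbad
      rw [RingHom.mem_ker, binom] at h0
      have c1 : (Sum.inl b : Vars) ≠ Sum.inl a := by simp [hne.symm]
      have c2 : (Sum.inl b : Vars) ≠ Sum.inr b := by simp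
      have c3 : (Sum.inr a : Vars) ≠ Sum.inl a := by simp
      have c4 : (Sum.inr a : Vars) ≠ Sum.inr b := by simp [hne]
      simp only [map_sub, map_mul, eval_X] at h0
      simp only [hw] at h0
      rw [if_pos (Or.inl trivial), if_pos (Or.inr trivial),
        if_neg (not_or.mpr ⟨c1, c2⟩), if_neg (not_or.mpr ⟨c3, c4⟩)] at h0
      norm_num at h0

/-- membership of an edge binomial in the span of a set of variables, both of whose
monomials are hit. -/
lemma binom_mem_span {T : Finset Vars} (a b : Fin 8) (u₁ u₂ : Vars)
    (h1 : u₁ ∈ T) (h2 : u₂ ∈ T)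
    (e1 : u₁ = Sum.inl a ∨ u₁ = Sum.inr b) (e2 : u₂ = Sum.inl b ∨ u₂ = Sum.inr a) :
    binom a b ∈ Ideal.span (X '' ((T : Set Vars))) := by
  rw [binom]
  refine Ideal.sub_mem _ ?_ ?_
  · rcases e1 with rfl | rfl
    · exact termL_mem _ _ (Finset.mem_coe.mpr h1)
    · exact termR_mem _ _ (Finset.mem_coe.mpr h1)
  · rcases e2 with rfl | rfl
    · exact termL_mem _ _ (Finset.mem_coe.mpr h2)
    · exact termR_mem _ _ (Finset.mem_coe.mpr h2)

noncomputable def chainSeries : LTSeries (PrimeSpectrum ↥(binomialEdgeRing ℚ G2)) where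
  length := 11
  toFun := fun i =>
    ⟨Ideal.comap (Subalgebra.val (binomialEdgeRing ℚ G2))
        (Ideal.span (X '' ((Ts i : Set Vars)))), by
      haveI : DecidablePred (· ∈ ((Ts i : Set Vars))) := fun v => Finset.decidableMem v (Ts i)
      haveI := spanX_isPrime (k := ℚ) ((Ts i : Set Vars))
      exact Ideal.IsPrime.comap _⟩
  step := by
    intro i
    show (_ : PrimeSpectrum ↥(binomialEdgeRing ℚ G2)) < _
    rw [← PrimeSpectrum.asIdeal_lt_asIdeal]
    fin_cases i
    · exact step_lt (Ts 0) (Ts 1) (by decide) 2 3 (G2_adj 2 3 (by decide))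
        (binom_mem_span 2 3 (Sum.inr 3) (Sum.inr 2) (by decide) (by decide)
          (Or.inr rfl) (Or.inr rfl)) (by decide) (by decide) (by decide)
    · exact step_lt (Ts 1) (Ts 2) (by decide) 2 1 (G2_adj 2 1 (by decide))
        (binom_mem_span 2 1 (Sum.inr 1) (Sum.inr 2) (by decide) (by decide)
          (Or.inr rfl) (Or.inr rfl)) (by decide) (by decide) (by decide)
    · exact step_lt (Ts 2) (Ts 3) (by decide) 1 0 (G2_adj 1 0 (by decide))
        (binom_mem_span 1 0 (Sum.inr 0) (Sum.inr 1) (by decide) (by decide)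
          (Or.inr rfl) (Or.inr rfl)) (by decide) (by decide) (by decide)
    · exact step_lt (Ts 3) (Ts 4) (by decide) 5 6 (G2_adj 5 6 (by decide))
        (binom_mem_span 5 6 (Sum.inl 5) (Sum.inl 6) (by decide) (by decide)
          (Or.inl rfl) (Or.inl rfl)) (by decide) (by decide) (by decide)
    · exact step_lt (Ts 4) (Ts 5) (by decide) 7 6 (G2_adj 7 6 (by decide))
        (binom_mem_span 7 6 (Sum.inr 6) (Sum.inl 6) (by decide) (by decide)
          (Or.inr rfl) (Or.inl rfl)) (by decide) (by decide) (by decide)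
    · exact step_lt (Ts 5) (Ts 6) (by decide) 7 4 (G2_adj 7 4 (by decide))
        (binom_mem_span 7 4 (Sum.inl 7) (Sum.inr 7) (by decide) (by decide)
          (Or.inl rfl) (Or.inr rfl)) (by decide) (by decide) (by decide)
    · exact step_lt (Ts 6) (Ts 7) (by decide) 4 5 (G2_adj 4 5 (by decide))
        (binom_mem_span 4 5 (Sum.inl 4) (Sum.inl 5) (by decide) (by decide)
          (Or.inl rfl) (Or.inl rfl)) (by decide) (by decide) (by decide)
    · exact step_lt (Ts 7) (Ts 8) (by decide) 3 4 (G2_adj 3 4 (by decide))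
        (binom_mem_span 3 4 (Sum.inl 3) (Sum.inl 4) (by decide) (by decide)
          (Or.inl rfl) (Or.inl rfl)) (by decide) (by decide) (by decide)
    · exact step_lt (Ts 8) (Ts 9) (by decide) 1 4 (G2_adj 1 4 (by decide))
        (binom_mem_span 1 4 (Sum.inl 1) (Sum.inl 4) (by decide) (by decide)
          (Or.inl rfl) (Or.inl rfl)) (by decide) (by decide) (by decide)
    · exact step_lt (Ts 9) (Ts 10) (by decide) 2 5 (G2_adj 2 5 (by decide))
        (binom_mem_span 2 5 (Sum.inl 2) (Sum.inl 5) (by decide) (by decide)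
          (Or.inl rfl) (Or.inl rfl)) (by decide) (by decide) (by decide)
    · exact step_lt (Ts 10) (Ts 11) (by decide) 0 5 (G2_adj 0 5 (by decide))
        (binom_mem_span 0 5 (Sum.inr 5) (Sum.inl 5) (by decide) (by decide)
          (Or.inr rfl) (Or.inl rfl)) (by decide) (by decide) (by decide)

lemma lower_bound :
    ((11 : ℕ) : WithBot ℕ∞) ≤ ringKrullDim ↥(binomialEdgeRing ℚ G2) := by
  have := Order.LTSeries.length_le_krullDim chainSeries
  exact_mod_cast this

noncomputable def HH : MvPolynomial (Fin 11) ℚ := X 5 * X 7 - X 0 * X 3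

noncomputable def GG : MvPolynomial (Fin 11) ℚ :=
  X 0 * X 2 * X 4 + X 1 * X 3 * X 6 + X 1 * X 4 * X 5 + X 2 * X 6 * X 7

lemma aeval_HH : aeval (fun i : Fin 11 => fgen i.castSucc) HH
    = binom 0 3 * binom 1 4 - binom 0 1 * binom 3 4 := by
  rw [HH]
  simp only [map_sub, map_mul, aeval_X]
  rfl

lemma aeval_GG : aeval (fun i : Fin 11 => fgen i.castSucc) GG
    = binom 0 1 * binom 2 3 * binom 4 5 + binom 1 2 * binom 3 4 * binom 0 5 +
      binom 1 2 * binom 4 5 * binom 0 3 + binom 2 3 * binom 0 5 * binom 1 4 := by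
  rw [GG]
  simp only [map_add, map_mul, aeval_X]
  rfl

lemma upper_bound :
    ringKrullDim ↥(binomialEdgeRing ℚ G2) ≤ ((11 : ℕ) : WithBot ℕ∞) := by
  have hlen : ∀ p : LTSeries (PrimeSpectrum ↥(binomialEdgeRing ℚ G2)), p.length ≤ 11 := by
    intro p
    by_contra hcon
    push_neg at hcon
    have h12 : 12 ≤ p.length := hcon
    set q : Fin 12 → Ideal ↥(binomialEdgeRing ℚ G2) :=
      fun i => (p ⟨(i : ℕ) + 1, by omega⟩).asIdeal with hq
    have hprime : ∀ i, (q i).IsPrime := fun i => (p _).isPrime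
    have hmono : StrictMono q := by
      intro i j hij
      rw [hq]
      rw [PrimeSpectrum.asIdeal_lt_asIdeal]
      apply p.strictMono
      rw [Fin.mk_lt_mk]
      have : (i : ℕ) < (j : ℕ) := hij
      omega
    have hne : ∀ i, q i ≠ ⊥ := by
      intro i hbot
      have h0 : (p ⟨0, by omega⟩).asIdeal < q i := by
        rw [hq, PrimeSpectrum.asIdeal_lt_asIdeal]
        apply p.strictMono
        rw [Fin.mk_lt_mk]
        omega
      rw [hbot] at h0
      exact not_lt_bot h0
    obtain ⟨x, hx⟩ := chain_to_indep (k := ℚ) 12 ↥(binomialEdgeRing ℚ G2) q hprime hmono hne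
    have hx' : AlgebraicIndependent ℚ
        (fun i : Fin 12 => ((x i : SS))) := by
      have := hx.map' (f := Subalgebra.val (binomialEdgeRing ℚ G2)) Subtype.val_injective
      exact this
    refine no_big_indep (n := 11) fgen HH GG ?_ ?_ _ ?_ hx'
    · rw [aeval_HH]
      exact hH0
    · rw [aeval_HH, aeval_GG]
      exact rel0
    · intro i
      exact adjoin_eq.le (x i).2
  rw [ringKrullDim, Order.krullDim_eq_iSup_length]
  have h1 : ⨆ (p : LTSeries (PrimeSpectrum ↥(binomialEdgeRing ℚ G2))), (p.length : ℕ∞) ≤ 11 :=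
    iSup_le fun p => by exact_mod_cast hlen p
  rw [show ((11 : ℕ) : WithBot ℕ∞) = ((11 : ℕ∞) : WithBot ℕ∞) from rfl, WithBot.coe_le_coe]
  exact h1

/-- **Example 4.4 (ii).** `G_2` has `12` edges and `dim R(G_2) = 11` over `ℚ`; in particular
the Krull dimension is strictly smaller than `min{n, 2d−4} = 12`. -/
theorem krullDim_binomialEdgeRing_G2 :
    G2.edgeSet.ncard = 12 ∧
      ringKrullDim (binomialEdgeRing ℚ G2) = ((11 : ℕ) : WithBot ℕ∞) ∧
      ringKrullDim (binomialEdgeRing ℚ G2) < ((12 : ℕ) : WithBot ℕ∞) := by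
  have heq : ringKrullDim (binomialEdgeRing ℚ G2) = ((11 : ℕ) : WithBot ℕ∞) :=
    le_antisymm upper_bound lower_bound
  refine ⟨edge_count, heq, ?_⟩
  rw [heq]
  exact_mod_cast (by norm_num : (11 : ℕ∞) < 12)
end
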